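/- arXiv:1405.6469 — 7 statements merged into one kernel-verified Lean document; each statement's English description precedes it below -/
import Mathlib

section
/- Let L < U be real numbers and r > 0. For every b ∈ (L,U) and all a₁, a₂ ∈ (L,U), the function γ satisfies |γ(L,U;r,a₁,b) − γ(L,U;r,a₂,b)| ≤ K(L,U,r)·|a₁ − a₂|; that is, a ↦ γ(L,U;r,a,b) is Lipschitz on (L,U) with Lipschitz constant at most K(L,U,r). -/
/-- The term `σ_j(a,b)` from the series expansion of the Brownian bridge
non-exit probability. -/
noncomputable def sigmaJ (L U r a b : ℝ) (j : ℕ) : ℝ :=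
  Real.exp (-(2/r) * (((U-L)*j + L - a) * ((U-L)*j + L - b))) +
  Real.exp (-(2/r) * (((U-L)*j - U + a) * ((U-L)*j - U + b)))

/-- The term `τ_j(a,b)` from the series expansion of the Brownian bridge
non-exit probability. -/
noncomputable def tauJ (L U r a b : ℝ) (j : ℕ) : ℝ :=
  Real.exp (-(2*(U-L)*j/r) * ((U-L)*j + a - b)) +
  Real.exp (-(2*(U-L)*j/r) * ((U-L)*j + b - a))

/-- `γ(L,U;r,a,b) = 1 - ∑_{j=1}^∞ (σ_j(a,b) - τ_j(a,b))` if `a, b ∈ (L,U)`, else `0`.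
(The series is indexed by `j = k+1`, `k : ℕ`.) -/
noncomputable def gammaFn (L U r a b : ℝ) : ℝ :=
  if a ∈ Set.Ioo L U ∧ b ∈ Set.Ioo L U then
    1 - ∑' k : ℕ, (sigmaJ L U r a b (k+1) - tauJ L U r a b (k+1))
  else 0

/-- `K(L,U,r) = (8(U-L)/r) ∑_{j=1}^∞ j exp(-(2/r)(U-L)²(j-1)²)`
(indexed by `j = k+1`, `k : ℕ`). -/
noncomputable def Kconst (L U r : ℝ) : ℝ :=
  (8*(U-L)/r) * ∑' k : ℕ, ((k:ℝ)+1) * Real.exp (-(2/r) * (U-L)^2 * (k:ℝ)^2)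



lemma abs_exp_sub_exp_le {x y M : ℝ} (hx : x ≤ M) (hy : y ≤ M) :
    |Real.exp x - Real.exp y| ≤ Real.exp M * |x - y| := by
  wlog h : y ≤ x with H
  · rw [abs_sub_comm, abs_sub_comm x y]; exact H hy hx (le_of_not_ge h)
  rw [abs_of_nonneg (sub_nonneg.2 (Real.exp_le_exp.2 h)), abs_of_nonneg (sub_nonneg.2 h)]
  have h1 : 1 + (y - x) ≤ Real.exp (y - x) := by linarith [Real.add_one_le_exp (y - x)]
  have h2 : Real.exp (y - x) * Real.exp x = Real.exp y := by
    rw [← Real.exp_add]; ring_nf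
  have h3 : Real.exp x ≤ Real.exp M := Real.exp_le_exp.2 hx
  nlinarith [Real.exp_pos x, sub_nonneg.2 h]

lemma exp_arg_le {r m P Q : ℝ} (hr : 0 < r) (hm : 0 ≤ m) (hP : m ≤ P) (hQ : m ≤ Q) :
    -(2/r)*(P*Q) ≤ -(2/r)*m^2 := by
  have h2r : (0:ℝ) ≤ 2/r := by positivity
  nlinarith [mul_nonneg h2r (sub_nonneg.2 (mul_le_mul hP hQ hm (hm.trans hP)))]

lemma expterm_bound {r m X d P₁ P₂ Q u₁ u₂ : ℝ} (hr : 0 < r) (hm : 0 ≤ m)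
    (hu₁ : u₁ = -(2/r)*(P₁*Q)) (hu₂ : u₂ = -(2/r)*(P₂*Q))
    (hP₁ : m ≤ P₁) (hP₂ : m ≤ P₂) (hQl : m ≤ Q) (hQu : Q ≤ X)
    (hPd : |P₁ - P₂| ≤ |d|) :
    |Real.exp u₁ - Real.exp u₂| ≤ Real.exp (-(2/r)*m^2) * (2/r * X * |d|) := by
  have hM₁ : u₁ ≤ -(2/r)*m^2 := hu₁ ▸ exp_arg_le hr hm hP₁ hQl
  have hM₂ : u₂ ≤ -(2/r)*m^2 := hu₂ ▸ exp_arg_le hr hm hP₂ hQl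
  have h2r : (0:ℝ) ≤ 2/r := by positivity
  have harg : |u₁ - u₂| ≤ 2/r * X * |d| := by
    have he : u₁ - u₂ = (2/r * Q) * (P₂ - P₁) := by rw [hu₁, hu₂]; ring
    rw [he, abs_mul, abs_mul, abs_of_nonneg h2r, abs_of_nonneg (hm.trans hQl), abs_sub_comm P₂ P₁]
    have hX : (0:ℝ) ≤ X := (hm.trans hQl).trans hQu
    calc 2/r * Q * |P₁ - P₂| ≤ 2/r * X * |P₁ - P₂| := by
          apply mul_le_mul_of_nonneg_right _ (abs_nonneg _)
          exact mul_le_mul_of_nonneg_left hQu h2r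
      _ ≤ 2/r * X * |d| := by
          exact mul_le_mul_of_nonneg_left hPd (by positivity)
  exact (abs_exp_sub_exp_le hM₁ hM₂).trans
    (mul_le_mul_of_nonneg_left harg (Real.exp_pos _).le)

lemma termBound (L U r b a₁ a₂ : ℝ) (hLU : L < U) (hr : 0 < r)
    (hb : b ∈ Set.Ioo L U) (ha₁ : a₁ ∈ Set.Ioo L U) (ha₂ : a₂ ∈ Set.Ioo L U) (k : ℕ) :
    |(sigmaJ L U r a₁ b (k+1) - tauJ L U r a₁ b (k+1)) -
     (sigmaJ L U r a₂ b (k+1) - tauJ L U r a₂ b (k+1))| ≤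
    (8*(U-L)/r * (((k:ℝ)+1) * Real.exp (-(2/r) * (U-L)^2 * (k:ℝ)^2))) * |a₁-a₂| := by
  have hc : (0:ℝ) < U - L := sub_pos.2 hLU
  set K : ℝ := (k:ℝ) with hKdef
  have hK : (0:ℝ) ≤ K := Nat.cast_nonneg k
  have hm : (0:ℝ) ≤ (U-L)*K := mul_nonneg hc.le hK
  have hX : (U-L)*(K+1) = (U-L)*K + (U-L) := by ring
  obtain ⟨hb1, hb2⟩ := hb
  obtain ⟨h11, h12⟩ := ha₁
  obtain ⟨h21, h22⟩ := ha₂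
  have hd : |a₁ - a₁ - (a₂ - a₂)| ≤ |a₁ - a₂| := by simp
  -- the four exponential-difference bounds
  have e1 := expterm_bound (m := (U-L)*K) (X := (U-L)*(K+1)) (d := a₁ - a₂)
    (P₁ := (U-L)*(K+1) + L - a₁) (P₂ := (U-L)*(K+1) + L - a₂)
    (Q := (U-L)*(K+1) + L - b)
    (u₁ := -(2/r) * (((U-L)*(K+1) + L - a₁) * ((U-L)*(K+1) + L - b)))
    (u₂ := -(2/r) * (((U-L)*(K+1) + L - a₂) * ((U-L)*(K+1) + L - b)))
    hr hm rfl rfl (by linarith) (by linarith) (by linarith) (by linarith)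
    (by rw [show (U-L)*(K+1) + L - a₁ - ((U-L)*(K+1) + L - a₂) = -(a₁ - a₂) by ring, abs_neg])
  have e2 := expterm_bound (m := (U-L)*K) (X := (U-L)*(K+1)) (d := a₁ - a₂)
    (P₁ := (U-L)*(K+1) - U + a₁) (P₂ := (U-L)*(K+1) - U + a₂)
    (Q := (U-L)*(K+1) - U + b)
    (u₁ := -(2/r) * (((U-L)*(K+1) - U + a₁) * ((U-L)*(K+1) - U + b)))
    (u₂ := -(2/r) * (((U-L)*(K+1) - U + a₂) * ((U-L)*(K+1) - U + b)))
    hr hm rfl rfl (by linarith) (by linarith) (by linarith) (by linarith)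
    (by rw [show (U-L)*(K+1) - U + a₁ - ((U-L)*(K+1) - U + a₂) = a₁ - a₂ by ring])
  have e3 := expterm_bound (m := (U-L)*K) (X := (U-L)*(K+1)) (d := a₁ - a₂)
    (P₁ := (U-L)*(K+1) + a₁ - b) (P₂ := (U-L)*(K+1) + a₂ - b)
    (Q := (U-L)*(K+1))
    (u₁ := -(2*(U-L)*(K+1)/r) * ((U-L)*(K+1) + a₁ - b))
    (u₂ := -(2*(U-L)*(K+1)/r) * ((U-L)*(K+1) + a₂ - b))
    hr hm (by ring) (by ring) (by linarith) (by linarith) (by linarith) le_rfl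
    (by rw [show (U-L)*(K+1) + a₁ - b - ((U-L)*(K+1) + a₂ - b) = a₁ - a₂ by ring])
  have e4 := expterm_bound (m := (U-L)*K) (X := (U-L)*(K+1)) (d := a₁ - a₂)
    (P₁ := (U-L)*(K+1) + b - a₁) (P₂ := (U-L)*(K+1) + b - a₂)
    (Q := (U-L)*(K+1))
    (u₁ := -(2*(U-L)*(K+1)/r) * ((U-L)*(K+1) + b - a₁))
    (u₂ := -(2*(U-L)*(K+1)/r) * ((U-L)*(K+1) + b - a₂))
    hr hm (by ring) (by ring) (by linarith) (by linarith) (by linarith) le_rfl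
    (by rw [show (U-L)*(K+1) + b - a₁ - ((U-L)*(K+1) + b - a₂) = -(a₁ - a₂) by ring, abs_neg])
  have hMeq : -(2/r)*((U-L)*K)^2 = -(2/r) * (U-L)^2 * K^2 := by ring
  rw [hMeq] at e1 e2 e3 e4
  set E : ℝ := Real.exp (-(2/r) * (U-L)^2 * K^2) with hE
  set B : ℝ := E * (2/r * ((U-L)*(K+1)) * |a₁ - a₂|) with hB
  have hcast : ((k+1 : ℕ) : ℝ) = K + 1 := by push_cast [hKdef]; ring
  have hexpand : (sigmaJ L U r a₁ b (k+1) - tauJ L U r a₁ b (k+1)) -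
      (sigmaJ L U r a₂ b (k+1) - tauJ L U r a₂ b (k+1)) =
      (Real.exp (-(2/r) * (((U-L)*(K+1) + L - a₁) * ((U-L)*(K+1) + L - b))) -
       Real.exp (-(2/r) * (((U-L)*(K+1) + L - a₂) * ((U-L)*(K+1) + L - b)))) +
      (Real.exp (-(2/r) * (((U-L)*(K+1) - U + a₁) * ((U-L)*(K+1) - U + b))) -
       Real.exp (-(2/r) * (((U-L)*(K+1) - U + a₂) * ((U-L)*(K+1) - U + b)))) +
      -(Real.exp (-(2*(U-L)*(K+1)/r) * ((U-L)*(K+1) + a₁ - b)) -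
        Real.exp (-(2*(U-L)*(K+1)/r) * ((U-L)*(K+1) + a₂ - b))) +
      -(Real.exp (-(2*(U-L)*(K+1)/r) * ((U-L)*(K+1) + b - a₁)) -
        Real.exp (-(2*(U-L)*(K+1)/r) * ((U-L)*(K+1) + b - a₂))) := by
    simp only [sigmaJ, tauJ, hcast]
    ring
  rw [hexpand]
  have habs : ∀ x y z w : ℝ, |x + y + -z + -w| ≤ |x| + |y| + |z| + |w| := by
    intro x y z w
    calc |x + y + -z + -w| ≤ |x + y + -z| + |-w| := abs_add_le _ _
      _ ≤ (|x + y| + |-z|) + |-w| := by gcongr; exact abs_add_le _ _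
      _ ≤ ((|x| + |y|) + |-z|) + |-w| := by gcongr; exact abs_add_le _ _
      _ = |x| + |y| + |z| + |w| := by rw [abs_neg, abs_neg]
  calc |_ + _ + -_ + -_| ≤ _ := habs _ _ _ _
    _ ≤ B + B + B + B := by gcongr
    _ = (8*(U-L)/r * ((K+1) * E)) * |a₁-a₂| := by rw [hB]; field_simp; ring

lemma fBound (L U r b a : ℝ) (hLU : L < U) (hr : 0 < r)
    (hb : b ∈ Set.Ioo L U) (ha : a ∈ Set.Ioo L U) (k : ℕ) :
    |sigmaJ L U r a b (k+1) - tauJ L U r a b (k+1)| ≤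
    4 * Real.exp (-(2/r) * (U-L)^2 * (k:ℝ)^2) := by
  have hc : (0:ℝ) < U - L := sub_pos.2 hLU
  set K : ℝ := (k:ℝ) with hKdef
  have hK : (0:ℝ) ≤ K := Nat.cast_nonneg k
  have hm : (0:ℝ) ≤ (U-L)*K := mul_nonneg hc.le hK
  have hX : (U-L)*(K+1) = (U-L)*K + (U-L) := by ring
  obtain ⟨hb1, hb2⟩ := hb
  obtain ⟨ha1, ha2⟩ := ha
  have hcast : ((k+1 : ℕ) : ℝ) = K + 1 := by push_cast [hKdef]; ring
  have hMeq : -(2/r)*((U-L)*K)^2 = -(2/r) * (U-L)^2 * K^2 := by ring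
  set M : ℝ := -(2/r) * (U-L)^2 * K^2 with hMdef
  have t1 : -(2/r) * (((U-L)*(K+1) + L - a) * ((U-L)*(K+1) + L - b)) ≤ M := by
    rw [← hMeq]; exact exp_arg_le hr hm (by linarith) (by linarith)
  have t2 : -(2/r) * (((U-L)*(K+1) - U + a) * ((U-L)*(K+1) - U + b)) ≤ M := by
    rw [← hMeq]; exact exp_arg_le hr hm (by linarith) (by linarith)
  have t3 : -(2*(U-L)*(K+1)/r) * ((U-L)*(K+1) + a - b) ≤ M := by
    rw [← hMeq]
    calc -(2*(U-L)*(K+1)/r) * ((U-L)*(K+1) + a - b)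
        = -(2/r) * (((U-L)*(K+1) + a - b) * ((U-L)*(K+1))) := by ring
      _ ≤ -(2/r)*((U-L)*K)^2 := exp_arg_le hr hm (by linarith) (by linarith)
  have t4 : -(2*(U-L)*(K+1)/r) * ((U-L)*(K+1) + b - a) ≤ M := by
    rw [← hMeq]
    calc -(2*(U-L)*(K+1)/r) * ((U-L)*(K+1) + b - a)
        = -(2/r) * (((U-L)*(K+1) + b - a) * ((U-L)*(K+1))) := by ring
      _ ≤ -(2/r)*((U-L)*K)^2 := exp_arg_le hr hm (by linarith) (by linarith)
  simp only [sigmaJ, tauJ, hcast]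
  have p1 := Real.exp_pos (-(2/r) * (((U-L)*(K+1) + L - a) * ((U-L)*(K+1) + L - b)))
  have p2 := Real.exp_pos (-(2/r) * (((U-L)*(K+1) - U + a) * ((U-L)*(K+1) - U + b)))
  have p3 := Real.exp_pos (-(2*(U-L)*(K+1)/r) * ((U-L)*(K+1) + a - b))
  have p4 := Real.exp_pos (-(2*(U-L)*(K+1)/r) * ((U-L)*(K+1) + b - a))
  have q1 := Real.exp_le_exp.2 t1
  have q2 := Real.exp_le_exp.2 t2
  have q3 := Real.exp_le_exp.2 t3
  have q4 := Real.exp_le_exp.2 t4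
  rw [abs_le]
  constructor <;> [nlinarith; nlinarith]

lemma summable_aux (L U r : ℝ) (hLU : L < U) (hr : 0 < r) :
    Summable (fun k : ℕ => Real.exp (-(2/r) * (U-L)^2 * (k:ℝ)^2)) ∧
    Summable (fun k : ℕ => ((k:ℝ)+1) * Real.exp (-(2/r) * (U-L)^2 * (k:ℝ)^2)) := by
  have hc : (0:ℝ) < U - L := sub_pos.2 hLU
  set ρ : ℝ := Real.exp (-(2/r) * (U-L)^2) with hρdef
  have hρ0 : 0 < ρ := Real.exp_pos _
  have hρ1 : ρ < 1 := by
    rw [hρdef, Real.exp_lt_one_iff]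
    have : (0:ℝ) < 2/r * (U-L)^2 := by positivity
    linarith
  have hle : ∀ k : ℕ, Real.exp (-(2/r) * (U-L)^2 * (k:ℝ)^2) ≤ ρ ^ k := by
    intro k
    rw [hρdef, ← Real.exp_nat_mul]
    apply Real.exp_le_exp.2
    have hk2 : (k:ℝ) ≤ (k:ℝ)^2 := by exact_mod_cast Nat.le_self_pow two_ne_zero k
    have h0 : (0:ℝ) ≤ 2/r * (U-L)^2 := by positivity
    nlinarith
  have hgeo : Summable (fun k : ℕ => ρ ^ k) := summable_geometric_of_lt_one hρ0.le hρ1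
  have hpow : Summable (fun k : ℕ => ((k:ℝ)+1) * ρ ^ k) := by
    have h1 : Summable (fun k : ℕ => (k:ℝ)^1 * ρ ^ k) :=
      summable_pow_mul_geometric_of_norm_lt_one 1 (by rwa [Real.norm_eq_abs, abs_of_pos hρ0])
    have := h1.add hgeo
    refine this.congr fun k => ?_
    simp; ring
  constructor
  · refine Summable.of_nonneg_of_le (fun k => (Real.exp_pos _).le) hle hgeo
  · refine Summable.of_nonneg_of_le (fun k => by positivity) (fun k => ?_) hpow
    have := hle k
    have hk : (0:ℝ) ≤ (k:ℝ)+1 := by positivity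
    exact mul_le_mul_of_nonneg_left this hk

/-- For `L < U`, `r > 0`, `b ∈ (L,U)`, the map `a ↦ γ(L,U;r,a,b)` is Lipschitz on
`(L,U)` with constant at most `K(L,U,r)`. -/
theorem gamma_lipschitz_in_a (L U r : ℝ) (hLU : L < U) (hr : 0 < r)
    (b : ℝ) (hb : b ∈ Set.Ioo L U)
    (a₁ a₂ : ℝ) (ha₁ : a₁ ∈ Set.Ioo L U) (ha₂ : a₂ ∈ Set.Ioo L U) :
    |gammaFn L U r a₁ b - gammaFn L U r a₂ b| ≤ Kconst L U r * |a₁ - a₂| := by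
  have hc : (0:ℝ) < U - L := sub_pos.2 hLU
  obtain ⟨hEs, hGs⟩ := summable_aux L U r hLU hr
  have hs1 : Summable (fun k : ℕ => sigmaJ L U r a₁ b (k+1) - tauJ L U r a₁ b (k+1)) := by
    refine Summable.of_norm_bounded (hEs.mul_left 4) (fun k => ?_)
    simpa [Real.norm_eq_abs] using fBound L U r b a₁ hLU hr hb ha₁ k
  have hs2 : Summable (fun k : ℕ => sigmaJ L U r a₂ b (k+1) - tauJ L U r a₂ b (k+1)) := by
    refine Summable.of_norm_bounded (hEs.mul_left 4) (fun k => ?_)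
    simpa [Real.norm_eq_abs] using fBound L U r b a₂ hLU hr hb ha₂ k
  have hbnd : ∀ k : ℕ,
      |(sigmaJ L U r a₁ b (k+1) - tauJ L U r a₁ b (k+1)) -
        (sigmaJ L U r a₂ b (k+1) - tauJ L U r a₂ b (k+1))| ≤
      (8*(U-L)/r * (((k:ℝ)+1) * Real.exp (-(2/r) * (U-L)^2 * (k:ℝ)^2))) * |a₁-a₂| :=
    fun k => termBound L U r b a₁ a₂ hLU hr hb ha₁ ha₂ k
  have hGd : Summable (fun k : ℕ =>
      (8*(U-L)/r * (((k:ℝ)+1) * Real.exp (-(2/r) * (U-L)^2 * (k:ℝ)^2))) * |a₁-a₂|) :=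
    (hGs.mul_left (8*(U-L)/r)).mul_right |a₁-a₂|
  have habs : Summable (fun k : ℕ =>
      |(sigmaJ L U r a₁ b (k+1) - tauJ L U r a₁ b (k+1)) -
        (sigmaJ L U r a₂ b (k+1) - tauJ L U r a₂ b (k+1))|) :=
    Summable.of_nonneg_of_le (fun k => abs_nonneg _) hbnd hGd
  simp only [gammaFn, if_pos (And.intro ha₁ hb), if_pos (And.intro ha₂ hb)]
  have key : (1 - ∑' k : ℕ, (sigmaJ L U r a₁ b (k+1) - tauJ L U r a₁ b (k+1))) -
      (1 - ∑' k : ℕ, (sigmaJ L U r a₂ b (k+1) - tauJ L U r a₂ b (k+1))) =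
      -(∑' k : ℕ, ((sigmaJ L U r a₁ b (k+1) - tauJ L U r a₁ b (k+1)) -
        (sigmaJ L U r a₂ b (k+1) - tauJ L U r a₂ b (k+1)))) := by
    rw [Summable.tsum_sub hs1 hs2]; ring
  rw [key, abs_neg]
  calc |∑' k : ℕ, ((sigmaJ L U r a₁ b (k+1) - tauJ L U r a₁ b (k+1)) -
        (sigmaJ L U r a₂ b (k+1) - tauJ L U r a₂ b (k+1)))|
      ≤ ∑' k : ℕ, |(sigmaJ L U r a₁ b (k+1) - tauJ L U r a₁ b (k+1)) -
        (sigmaJ L U r a₂ b (k+1) - tauJ L U r a₂ b (k+1))| := by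
        simpa [Real.norm_eq_abs] using
          norm_tsum_le_tsum_norm (f := fun k : ℕ =>
            (sigmaJ L U r a₁ b (k+1) - tauJ L U r a₁ b (k+1)) -
            (sigmaJ L U r a₂ b (k+1) - tauJ L U r a₂ b (k+1)))
            (by simpa [Real.norm_eq_abs] using habs)
    _ ≤ ∑' k : ℕ, (8*(U-L)/r * (((k:ℝ)+1) * Real.exp (-(2/r) * (U-L)^2 * (k:ℝ)^2))) * |a₁-a₂| :=
        Summable.tsum_le_tsum hbnd habs hGd
    _ = Kconst L U r * |a₁ - a₂| := by
        rw [tsum_mul_right, tsum_mul_left, Kconst]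
end

section
/- Let L < U be real numbers and r > 0. For every a ∈ (L,U) and all b₁, b₂ ∈ (L,U), the function γ satisfies |γ(L,U;r,a,b₁) − γ(L,U;r,a,b₂)| ≤ K(L,U,r)·|b₁ − b₂|; that is, b ↦ γ(L,U;r,a,b) is Lipschitz on (L,U) with Lipschitz constant at most K(L,U,r). -/
lemma exp_abs_sub_le {x y c : ℝ} (hx : x ≤ c) (hy : y ≤ c) :
    |Real.exp x - Real.exp y| ≤ Real.exp c * |x - y| := by
  wlog h : x ≤ y with H
  · rw [abs_sub_comm, abs_sub_comm x y]; exact H hy hx (le_of_not_ge h)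
  · have h1 : Real.exp x ≤ Real.exp y := Real.exp_le_exp.mpr h
    rw [abs_of_nonpos (sub_nonpos.mpr h1), abs_of_nonpos (sub_nonpos.mpr h)]
    have key := Real.add_one_le_exp (x - y)
    have h2 : Real.exp y * (x - y + 1) ≤ Real.exp x := by
      have h2' := mul_le_mul_of_nonneg_left key (Real.exp_pos y).le
      rwa [← Real.exp_add, show y + (x - y) = x by ring] at h2'
    have h3 : Real.exp y ≤ Real.exp c := Real.exp_le_exp.mpr hy
    nlinarith [mul_nonneg (sub_nonneg.mpr h3) (sub_nonneg.mpr h)]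

lemma term_lip {r m S A B₁ B₂ : ℝ} (hr : 0 < r) (hm : 0 ≤ m) (hmA : m ≤ A) (hAS : A ≤ S)
    (hB1 : m ≤ B₁) (hB2 : m ≤ B₂) :
    |Real.exp (-(2/r) * (A * B₁)) - Real.exp (-(2/r) * (A * B₂))| ≤
      Real.exp (-(2/r) * m^2) * (2/r * S * |B₁ - B₂|) := by
  have h2r : 0 < 2/r := by positivity
  have hA : 0 ≤ A := hm.trans hmA
  have hAB1 : m^2 ≤ A*B₁ := by nlinarith [mul_le_mul hmA hB1 hm hA]
  have hAB2 : m^2 ≤ A*B₂ := by nlinarith [mul_le_mul hmA hB2 hm hA]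
  have hx : -(2/r) * (A * B₁) ≤ -(2/r) * m^2 := by
    have := mul_le_mul_of_nonneg_left hAB1 h2r.le; linarith
  have hy : -(2/r) * (A * B₂) ≤ -(2/r) * m^2 := by
    have := mul_le_mul_of_nonneg_left hAB2 h2r.le; linarith
  calc |Real.exp (-(2/r) * (A * B₁)) - Real.exp (-(2/r) * (A * B₂))|
      ≤ Real.exp (-(2/r) * m^2) * |(-(2/r) * (A * B₁)) - (-(2/r) * (A * B₂))| :=
        exp_abs_sub_le hx hy
    _ ≤ Real.exp (-(2/r) * m^2) * (2/r * S * |B₁ - B₂|) := by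
        apply mul_le_mul_of_nonneg_left _ (Real.exp_pos _).le
        have h5 : (-(2/r) * (A * B₁)) - (-(2/r) * (A * B₂)) = (2/r * A) * (B₂ - B₁) := by ring
        rw [h5, abs_mul, abs_of_nonneg (mul_nonneg h2r.le hA), abs_sub_comm]
        gcongr

lemma term_bd {r m A B : ℝ} (hr : 0 < r) (hm : 0 ≤ m) (hmA : m ≤ A) (hB : m ≤ B) :
    Real.exp (-(2/r) * (A * B)) ≤ Real.exp (-(2/r) * m^2) := by
  have h2r : 0 < 2/r := by positivity
  have hA : 0 ≤ A := hm.trans hmA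
  have hAB : m^2 ≤ A*B := by nlinarith [mul_le_mul hmA hB hm hA]
  have := mul_le_mul_of_nonneg_left hAB h2r.le
  exact Real.exp_le_exp.mpr (by linarith)


lemma master_summable {c : ℝ} (hc : 0 < c) :
    Summable (fun k : ℕ => ((k:ℝ)+1) * Real.exp (-c * (k:ℝ)^2)) := by
  have hq : ‖Real.exp (-c)‖ < 1 := by
    rw [Real.norm_eq_abs, abs_of_pos (Real.exp_pos _)]
    exact Real.exp_lt_one_iff.mpr (by linarith)
  have hs : Summable (fun k : ℕ => ((k:ℝ)+1) * (Real.exp (-c))^k) := by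
    have h1 := summable_pow_mul_geometric_of_norm_lt_one 1 hq
    have h2 := summable_geometric_of_norm_lt_one hq
    simpa [add_mul, one_mul, pow_one] using h1.add h2
  apply Summable.of_nonneg_of_le (fun k => by positivity) _ hs
  intro k
  have hk : (k:ℝ) ≤ (k:ℝ)^2 := by exact_mod_cast Nat.le_self_pow two_ne_zero k
  have hb : Real.exp (-c * (k:ℝ)^2) ≤ (Real.exp (-c))^k := by
    rw [← Real.exp_nat_mul]
    apply Real.exp_le_exp.mpr
    nlinarith [mul_le_mul_of_nonneg_left hk hc.le]
  exact mul_le_mul_of_nonneg_left hb (by positivity)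

lemma master_summable' {L U r : ℝ} (hLU : L < U) (hr : 0 < r) :
    Summable (fun k : ℕ => ((k:ℝ)+1) * Real.exp (-(2/r) * (U-L)^2 * (k:ℝ)^2)) := by
  have hD : (0:ℝ) < U - L := sub_pos.mpr hLU
  have hc : (0:ℝ) < 2/r*(U-L)^2 := mul_pos (by positivity) (pow_pos hD 2)
  have hM := master_summable hc
  have hexp : ∀ k : ℕ, (-(2/r*(U-L)^2)) * (k:ℝ)^2 = -(2/r) * (U-L)^2 * (k:ℝ)^2 :=
    fun k => by ring
  simpa only [hexp] using hM

lemma summable_st (L U r a b : ℝ) (hLU : L < U) (hr : 0 < r)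
    (ha : a ∈ Set.Ioo L U) (hb : b ∈ Set.Ioo L U) :
    Summable (fun k : ℕ => sigmaJ L U r a b (k+1) - tauJ L U r a b (k+1)) := by
  obtain ⟨ha1, ha2⟩ := ha
  obtain ⟨hb1, hb2⟩ := hb
  have hD : (0:ℝ) < U - L := sub_pos.mpr hLU
  have hM := master_summable' hLU hr
  apply Summable.of_norm_bounded (hM.mul_left 4)
  intro k
  rw [Real.norm_eq_abs]
  have hK0 : (0:ℝ) ≤ (k:ℝ) := Nat.cast_nonneg k
  have hm : (0:ℝ) ≤ (U-L)*(k:ℝ) := mul_nonneg hD.le hK0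
  have hcast : ((k+1:ℕ):ℝ) = (k:ℝ) + 1 := by push_cast; ring
  have hexp : (U-L)*((k:ℝ)+1) = (U-L)*(k:ℝ) + U - L := by ring
  have hEk : Real.exp (-(2/r) * ((U-L)*(k:ℝ))^2) = Real.exp (-(2/r) * (U-L)^2 * (k:ℝ)^2) := by
    congr 1; ring
  have B1 := term_bd (r := r) (m := (U-L)*(k:ℝ)) (A := (U-L)*((k:ℝ)+1) + L - a)
      (B := (U-L)*((k:ℝ)+1) + L - b) hr hm (by linarith [hexp]) (by linarith [hexp])
  have B2 := term_bd (r := r) (m := (U-L)*(k:ℝ)) (A := (U-L)*((k:ℝ)+1) - U + a)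
      (B := (U-L)*((k:ℝ)+1) - U + b) hr hm (by linarith [hexp]) (by linarith [hexp])
  have B3 := term_bd (r := r) (m := (U-L)*(k:ℝ)) (A := (U-L)*((k:ℝ)+1))
      (B := (U-L)*((k:ℝ)+1) + a - b) hr hm (by linarith [hexp]) (by linarith [hexp])
  have B4 := term_bd (r := r) (m := (U-L)*(k:ℝ)) (A := (U-L)*((k:ℝ)+1))
      (B := (U-L)*((k:ℝ)+1) + b - a) hr hm (by linarith [hexp]) (by linarith [hexp])
  rw [hEk] at B1 B2 B3 B4
  simp only [sigmaJ, tauJ, hcast]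
  have ht1 : -(2*(U-L)*((k:ℝ)+1)/r) * ((U-L)*((k:ℝ)+1) + a - b)
      = -(2/r) * (((U-L)*((k:ℝ)+1)) * ((U-L)*((k:ℝ)+1) + a - b)) := by ring
  have ht2 : -(2*(U-L)*((k:ℝ)+1)/r) * ((U-L)*((k:ℝ)+1) + b - a)
      = -(2/r) * (((U-L)*((k:ℝ)+1)) * ((U-L)*((k:ℝ)+1) + b - a)) := by ring
  rw [ht1, ht2]
  have hp1 := (Real.exp_pos (-(2/r) * (((U-L)*((k:ℝ)+1) + L - a) * ((U-L)*((k:ℝ)+1) + L - b)))).le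
  have hp2 := (Real.exp_pos (-(2/r) * (((U-L)*((k:ℝ)+1) - U + a) * ((U-L)*((k:ℝ)+1) - U + b)))).le
  have hp3 := (Real.exp_pos (-(2/r) * (((U-L)*((k:ℝ)+1)) * ((U-L)*((k:ℝ)+1) + a - b)))).le
  have hp4 := (Real.exp_pos (-(2/r) * (((U-L)*((k:ℝ)+1)) * ((U-L)*((k:ℝ)+1) + b - a)))).le
  have hE0 := (Real.exp_pos (-(2/r) * (U-L)^2 * (k:ℝ)^2)).le
  rw [abs_le]
  constructor <;> nlinarith [mul_le_mul_of_nonneg_left hE0 hK0]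

set_option maxHeartbeats 1000000 in
lemma per_k (L U r a b₁ b₂ : ℝ) (hLU : L < U) (hr : 0 < r)
    (ha : a ∈ Set.Ioo L U) (hb₁ : b₁ ∈ Set.Ioo L U) (hb₂ : b₂ ∈ Set.Ioo L U) (k : ℕ) :
    |(sigmaJ L U r a b₁ (k+1) - tauJ L U r a b₁ (k+1)) -
     (sigmaJ L U r a b₂ (k+1) - tauJ L U r a b₂ (k+1))| ≤
    (8*(U-L)/r) * (((k:ℝ)+1) * Real.exp (-(2/r) * (U-L)^2 * (k:ℝ)^2)) * |b₁ - b₂| := by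
  obtain ⟨ha1, ha2⟩ := ha
  obtain ⟨hb11, hb12⟩ := hb₁
  obtain ⟨hb21, hb22⟩ := hb₂
  have hK0 : (0:ℝ) ≤ (k:ℝ) := Nat.cast_nonneg k
  have hD : (0:ℝ) < U - L := sub_pos.mpr hLU
  have hm : (0:ℝ) ≤ (U-L)*(k:ℝ) := mul_nonneg hD.le hK0
  have hcast : ((k+1:ℕ):ℝ) = (k:ℝ) + 1 := by push_cast; ring
  have hexp : (U-L)*((k:ℝ)+1) = (U-L)*(k:ℝ) + U - L := by ring
  simp only [sigmaJ, tauJ, hcast]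
  -- rewrite tau exponents into -(2/r)*(A*B) form
  have ht1 : ∀ b : ℝ, -(2*(U-L)*((k:ℝ)+1)/r) * ((U-L)*((k:ℝ)+1) + a - b)
      = -(2/r) * (((U-L)*((k:ℝ)+1)) * ((U-L)*((k:ℝ)+1) + a - b)) := fun b => by ring
  have ht2 : ∀ b : ℝ, -(2*(U-L)*((k:ℝ)+1)/r) * ((U-L)*((k:ℝ)+1) + b - a)
      = -(2/r) * (((U-L)*((k:ℝ)+1)) * ((U-L)*((k:ℝ)+1) + b - a)) := fun b => by ring
  rw [ht1 b₁, ht1 b₂, ht2 b₁, ht2 b₂]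
  have E1 := term_lip (r := r) (m := (U-L)*(k:ℝ)) (S := (U-L)*((k:ℝ)+1))
      (A := (U-L)*((k:ℝ)+1) + L - a) (B₁ := (U-L)*((k:ℝ)+1) + L - b₁)
      (B₂ := (U-L)*((k:ℝ)+1) + L - b₂) hr hm (by linarith [hexp]) (by linarith [hexp])
      (by linarith [hexp]) (by linarith [hexp])
  have E2 := term_lip (r := r) (m := (U-L)*(k:ℝ)) (S := (U-L)*((k:ℝ)+1))
      (A := (U-L)*((k:ℝ)+1) - U + a) (B₁ := (U-L)*((k:ℝ)+1) - U + b₁)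
      (B₂ := (U-L)*((k:ℝ)+1) - U + b₂) hr hm (by linarith [hexp]) (by linarith [hexp])
      (by linarith [hexp]) (by linarith [hexp])
  have E3 := term_lip (r := r) (m := (U-L)*(k:ℝ)) (S := (U-L)*((k:ℝ)+1))
      (A := (U-L)*((k:ℝ)+1)) (B₁ := (U-L)*((k:ℝ)+1) + a - b₁)
      (B₂ := (U-L)*((k:ℝ)+1) + a - b₂) hr hm (by linarith [hexp]) (le_refl _)
      (by linarith [hexp]) (by linarith [hexp])
  have E4 := term_lip (r := r) (m := (U-L)*(k:ℝ)) (S := (U-L)*((k:ℝ)+1))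
      (A := (U-L)*((k:ℝ)+1)) (B₁ := (U-L)*((k:ℝ)+1) + b₁ - a)
      (B₂ := (U-L)*((k:ℝ)+1) + b₂ - a) hr hm (by linarith [hexp]) (le_refl _)
      (by linarith [hexp]) (by linarith [hexp])
  -- normalize the |B₁ - B₂| factors to |b₁ - b₂|
  rw [show ((U-L)*((k:ℝ)+1) + L - b₁) - ((U-L)*((k:ℝ)+1) + L - b₂) = -(b₁ - b₂) by ring,
      abs_neg] at E1
  rw [show ((U-L)*((k:ℝ)+1) - U + b₁) - ((U-L)*((k:ℝ)+1) - U + b₂) = b₁ - b₂ by ring] at E2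
  rw [show ((U-L)*((k:ℝ)+1) + a - b₁) - ((U-L)*((k:ℝ)+1) + a - b₂) = -(b₁ - b₂) by ring,
      abs_neg] at E3
  rw [show ((U-L)*((k:ℝ)+1) + b₁ - a) - ((U-L)*((k:ℝ)+1) + b₂ - a) = b₁ - b₂ by ring] at E4
  have hEk : Real.exp (-(2/r) * ((U-L)*(k:ℝ))^2) = Real.exp (-(2/r) * (U-L)^2 * (k:ℝ)^2) := by
    congr 1; ring
  rw [hEk] at E1 E2 E3 E4
  set e1 := Real.exp (-(2/r) * (((U-L)*((k:ℝ)+1) + L - a) * ((U-L)*((k:ℝ)+1) + L - b₁)))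
  set e1' := Real.exp (-(2/r) * (((U-L)*((k:ℝ)+1) + L - a) * ((U-L)*((k:ℝ)+1) + L - b₂)))
  set e2 := Real.exp (-(2/r) * (((U-L)*((k:ℝ)+1) - U + a) * ((U-L)*((k:ℝ)+1) - U + b₁)))
  set e2' := Real.exp (-(2/r) * (((U-L)*((k:ℝ)+1) - U + a) * ((U-L)*((k:ℝ)+1) - U + b₂)))
  set e3 := Real.exp (-(2/r) * (((U-L)*((k:ℝ)+1)) * ((U-L)*((k:ℝ)+1) + a - b₁)))
  set e3' := Real.exp (-(2/r) * (((U-L)*((k:ℝ)+1)) * ((U-L)*((k:ℝ)+1) + a - b₂)))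
  set e4 := Real.exp (-(2/r) * (((U-L)*((k:ℝ)+1)) * ((U-L)*((k:ℝ)+1) + b₁ - a)))
  set e4' := Real.exp (-(2/r) * (((U-L)*((k:ℝ)+1)) * ((U-L)*((k:ℝ)+1) + b₂ - a)))
  have tri : |(e1 + e2 - (e3 + e4)) - (e1' + e2' - (e3' + e4'))| ≤
      |e1 - e1'| + |e2 - e2'| + |e3 - e3'| + |e4 - e4'| := by
    rw [show (e1 + e2 - (e3 + e4)) - (e1' + e2' - (e3' + e4'))
        = ((e1 - e1') + (e2 - e2')) + (-((e3 - e3') + (e4 - e4'))) from by ring]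
    calc |((e1 - e1') + (e2 - e2')) + (-((e3 - e3') + (e4 - e4')))|
        ≤ |(e1 - e1') + (e2 - e2')| + |(-((e3 - e3') + (e4 - e4')))| := abs_add_le _ _
      _ ≤ _ := by
          rw [abs_neg]
          have := abs_add_le (e1 - e1') (e2 - e2')
          have := abs_add_le (e3 - e3') (e4 - e4')
          linarith
  refine tri.trans ?_
  have hfin : Real.exp (-(2/r) * (U-L)^2 * (k:ℝ)^2) * (2/r * ((U-L)*((k:ℝ)+1)) * |b₁ - b₂|) * 4
      = (8*(U-L)/r) * (((k:ℝ)+1) * Real.exp (-(2/r) * (U-L)^2 * (k:ℝ)^2)) * |b₁ - b₂| := by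
    field_simp; ring
  linarith

/-- For `L < U`, `r > 0`, `a ∈ (L,U)`, the map `b ↦ γ(L,U;r,a,b)` is Lipschitz on
`(L,U)` with constant at most `K(L,U,r)`. -/
theorem gamma_lipschitz_in_b (L U r : ℝ) (hLU : L < U) (hr : 0 < r)
    (a : ℝ) (ha : a ∈ Set.Ioo L U)
    (b₁ b₂ : ℝ) (hb₁ : b₁ ∈ Set.Ioo L U) (hb₂ : b₂ ∈ Set.Ioo L U) :
    |gammaFn L U r a b₁ - gammaFn L U r a b₂| ≤ Kconst L U r * |b₁ - b₂| := by
  have hD : (0:ℝ) < U - L := sub_pos.mpr hLU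
  have hM := master_summable' hLU hr
  have hs₁ := summable_st L U r a b₁ hLU hr ha hb₁
  have hs₂ := summable_st L U r a b₂ hLU hr ha hb₂
  rw [gammaFn, if_pos ⟨ha, hb₁⟩, gammaFn, if_pos ⟨ha, hb₂⟩]
  have hd : (1 - ∑' k : ℕ, (sigmaJ L U r a b₁ (k+1) - tauJ L U r a b₁ (k+1)))
      - (1 - ∑' k : ℕ, (sigmaJ L U r a b₂ (k+1) - tauJ L U r a b₂ (k+1)))
      = ∑' k : ℕ, ((sigmaJ L U r a b₂ (k+1) - tauJ L U r a b₂ (k+1))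
          - (sigmaJ L U r a b₁ (k+1) - tauJ L U r a b₁ (k+1))) := by
    rw [Summable.tsum_sub hs₂ hs₁]; ring
  rw [hd]
  have hg : Summable (fun k : ℕ =>
      (8*(U-L)/r) * (((k:ℝ)+1) * Real.exp (-(2/r) * (U-L)^2 * (k:ℝ)^2)) * |b₁ - b₂|) :=
    (hM.mul_left _).mul_right _
  have hb : ∀ k : ℕ, ‖(sigmaJ L U r a b₂ (k+1) - tauJ L U r a b₂ (k+1))
      - (sigmaJ L U r a b₁ (k+1) - tauJ L U r a b₁ (k+1))‖ ≤
      (8*(U-L)/r) * (((k:ℝ)+1) * Real.exp (-(2/r) * (U-L)^2 * (k:ℝ)^2)) * |b₁ - b₂| := by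
    intro k
    rw [Real.norm_eq_abs]
    have := per_k L U r a b₂ b₁ hLU hr ha hb₂ hb₁ k
    rwa [abs_sub_comm b₂ b₁] at this
  have hbound := tsum_of_norm_bounded hg.hasSum hb
  rw [Real.norm_eq_abs] at hbound
  refine hbound.trans_eq ?_
  rw [tsum_mul_right, tsum_mul_left, Kconst]
end

section
/- Let L < U be real numbers, r > 0, and j ≥ 1 an integer. For all a, b ∈ (L,U), the partial derivative of σ_j(a,b) − τ_j(a,b) with respect to a, and likewise with respect to b, is bounded in absolute value by K_j := (8(U−L)j/r)·exp(−(2/r)(U−L)²(j−1)²). -/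
set_option maxHeartbeats 800000


lemma tb' {u v c K : ℝ} (hu : u ≤ v) (hc : |c| ≤ K) :
    |Real.exp u * c| ≤ Real.exp v * K := by
  rw [abs_mul, abs_of_pos (Real.exp_pos u)]
  exact mul_le_mul (Real.exp_le_exp.mpr hu) hc (abs_nonneg c) (Real.exp_pos v).le

lemma key_bound (L U r : ℝ) (hLU : L < U) (hr : 0 < r)
    (j : ℕ) (hj : 1 ≤ j) (a b : ℝ) (ha : a ∈ Set.Ioo L U) (hb : b ∈ Set.Ioo L U) :
    |deriv (fun a' => sigmaJ L U r a' b j - tauJ L U r a' b j) a| ≤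
      8*(U-L)*j/r * Real.exp (-(2/r) * (U-L)^2 * ((j:ℝ)-1)^2) := by
  obtain ⟨ha1, ha2⟩ := ha
  obtain ⟨hb1, hb2⟩ := hb
  have hJ : (1:ℝ) ≤ (j:ℝ) := by exact_mod_cast hj
  have hD : 0 < U - L := by linarith
  -- derivative computation
  have h1 : HasDerivAt (fun a' : ℝ => -(2/r) * (((U-L)*j + L - a') * ((U-L)*j + L - b)))
      (-(2/r) * (-1 * ((U-L)*j + L - b))) a :=
    (((hasDerivAt_id a).const_sub ((U-L)*j + L)).mul_const _).const_mul _
  have h2 : HasDerivAt (fun a' : ℝ => -(2/r) * (((U-L)*j - U + a') * ((U-L)*j - U + b)))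
      (-(2/r) * (1 * ((U-L)*j - U + b))) a :=
    (((hasDerivAt_id a).const_add ((U-L)*j - U)).mul_const _).const_mul _
  have h3 : HasDerivAt (fun a' : ℝ => -(2*(U-L)*j/r) * ((U-L)*j + a' - b))
      (-(2*(U-L)*j/r) * 1) a :=
    (((hasDerivAt_id a).const_add ((U-L)*j)).sub_const b).const_mul _
  have h4 : HasDerivAt (fun a' : ℝ => -(2*(U-L)*j/r) * ((U-L)*j + b - a'))
      (-(2*(U-L)*j/r) * (-1)) a :=
    ((hasDerivAt_id a).const_sub ((U-L)*j + b)).const_mul _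
  have hf : HasDerivAt (fun a' => sigmaJ L U r a' b j - tauJ L U r a' b j)
      ((Real.exp (-(2/r) * (((U-L)*j + L - a) * ((U-L)*j + L - b))) * (-(2/r) * (-1 * ((U-L)*j + L - b))) +
        Real.exp (-(2/r) * (((U-L)*j - U + a) * ((U-L)*j - U + b))) * (-(2/r) * (1 * ((U-L)*j - U + b)))) -
       (Real.exp (-(2*(U-L)*j/r) * ((U-L)*j + a - b)) * (-(2*(U-L)*j/r) * 1) +
        Real.exp (-(2*(U-L)*j/r) * ((U-L)*j + b - a)) * (-(2*(U-L)*j/r) * (-1)))) a := by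
    simp only [sigmaJ, tauJ]
    exact (h1.exp.add h2.exp).sub (h3.exp.add h4.exp)
  rw [hf.deriv]
  set E := Real.exp (-(2/r) * (U-L)^2 * ((j:ℝ)-1)^2) with hE
  have hK1 : (0:ℝ) ≤ 2*(U-L)*j/r := by positivity
  have hrinv : (0:ℝ) < 2/r := by positivity
  -- bounds on factors
  have hf1 : (U-L)*((j:ℝ)-1) ≤ (U-L)*j + L - a ∧ (U-L)*j + L - a ≤ (U-L)*j := by
    constructor <;> nlinarith
  have hg1 : (U-L)*((j:ℝ)-1) ≤ (U-L)*j + L - b ∧ (U-L)*j + L - b ≤ (U-L)*j := by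
    constructor <;> nlinarith
  have hf2 : (U-L)*((j:ℝ)-1) ≤ (U-L)*j - U + a ∧ (U-L)*j - U + a ≤ (U-L)*j := by
    constructor <;> nlinarith
  have hg2 : (U-L)*((j:ℝ)-1) ≤ (U-L)*j - U + b ∧ (U-L)*j - U + b ≤ (U-L)*j := by
    constructor <;> nlinarith
  have hDj1 : (0:ℝ) ≤ (U-L)*((j:ℝ)-1) := by nlinarith
  -- exponent bounds
  have he1 : -(2/r) * (((U-L)*j + L - a) * ((U-L)*j + L - b)) ≤ -(2/r) * (U-L)^2 * ((j:ℝ)-1)^2 := by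
    have hP : (U-L)^2 * ((j:ℝ)-1)^2 ≤ ((U-L)*j + L - a) * ((U-L)*j + L - b) := by
      nlinarith [hf1.1, hg1.1, hDj1]
    have h := mul_le_mul_of_nonneg_left hP hrinv.le
    ring_nf at h ⊢
    linarith
  have he2 : -(2/r) * (((U-L)*j - U + a) * ((U-L)*j - U + b)) ≤ -(2/r) * (U-L)^2 * ((j:ℝ)-1)^2 := by
    have hP : (U-L)^2 * ((j:ℝ)-1)^2 ≤ ((U-L)*j - U + a) * ((U-L)*j - U + b) := by
      nlinarith [hf2.1, hg2.1, hDj1]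
    have h := mul_le_mul_of_nonneg_left hP hrinv.le
    ring_nf at h ⊢
    linarith
  have he3 : -(2*(U-L)*j/r) * ((U-L)*j + a - b) ≤ -(2/r) * (U-L)^2 * ((j:ℝ)-1)^2 := by
    have h1 : (U-L)*((j:ℝ)-1) ≤ (U-L)*j + a - b := by nlinarith
    have h2 := mul_le_mul_of_nonneg_left h1 hK1
    have h3 : (2/r) * ((U-L)^2 * ((j:ℝ)-1)^2) ≤ (2/r) * (((U-L)*j) * ((U-L)*((j:ℝ)-1))) :=
      mul_le_mul_of_nonneg_left (by nlinarith) hrinv.le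
    ring_nf at h2 h3 ⊢
    linarith
  have he4 : -(2*(U-L)*j/r) * ((U-L)*j + b - a) ≤ -(2/r) * (U-L)^2 * ((j:ℝ)-1)^2 := by
    have h1 : (U-L)*((j:ℝ)-1) ≤ (U-L)*j + b - a := by nlinarith
    have h2 := mul_le_mul_of_nonneg_left h1 hK1
    have h3 : (2/r) * ((U-L)^2 * ((j:ℝ)-1)^2) ≤ (2/r) * (((U-L)*j) * ((U-L)*((j:ℝ)-1))) :=
      mul_le_mul_of_nonneg_left (by nlinarith) hrinv.le
    ring_nf at h2 h3 ⊢
    linarith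
  -- coefficient bounds
  have hc1 : |(-(2/r) * (-1 * ((U-L)*j + L - b)))| ≤ 2*(U-L)*j/r := by
    rw [abs_le]
    have s0 := mul_nonneg hrinv.le hDj1
    have s1 := mul_le_mul_of_nonneg_left hg1.1 hrinv.le
    have s2 := mul_le_mul_of_nonneg_left hg1.2 hrinv.le
    have sK := hK1
    ring_nf at s0 s1 s2 sK ⊢
    constructor <;> linarith
  have hc2 : |(-(2/r) * (1 * ((U-L)*j - U + b)))| ≤ 2*(U-L)*j/r := by
    rw [abs_le]
    have s0 := mul_nonneg hrinv.le hDj1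
    have s1 := mul_le_mul_of_nonneg_left hg2.1 hrinv.le
    have s2 := mul_le_mul_of_nonneg_left hg2.2 hrinv.le
    have sK := hK1
    ring_nf at s0 s1 s2 sK ⊢
    constructor <;> linarith
  have hc3 : |(-(2*(U-L)*j/r) * (1:ℝ))| ≤ 2*(U-L)*j/r := by
    rw [mul_one, abs_neg, abs_of_nonneg hK1]
  have hc4 : |(-(2*(U-L)*j/r) * (-1:ℝ))| ≤ 2*(U-L)*j/r := by
    rw [mul_neg_one, neg_neg, abs_of_nonneg hK1]
  have t1 := tb' he1 hc1
  have t2 := tb' he2 hc2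
  have t3 := tb' he3 hc3
  have t4 := tb' he4 hc4
  have habs : ∀ x1 x2 x3 x4 : ℝ, |x1 + x2 - (x3 + x4)| ≤ |x1| + |x2| + |x3| + |x4| := by
    intro x1 x2 x3 x4
    calc |x1 + x2 - (x3 + x4)| ≤ |x1 + x2| + |x3 + x4| := abs_sub _ _
    _ ≤ |x1| + |x2| + (|x3| + |x4|) := add_le_add (abs_add_le _ _) (abs_add_le _ _)
    _ = |x1| + |x2| + |x3| + |x4| := by ring
  calc _ ≤ _ := habs _ _ _ _
  _ ≤ E * (2*(U-L)*j/r) + E * (2*(U-L)*j/r) + E * (2*(U-L)*j/r) + E * (2*(U-L)*j/r) := by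
      exact add_le_add (add_le_add (add_le_add t1 t2) t3) t4
  _ = 8*(U-L)*j/r * E := by ring

/-- For `L < U`, `r > 0`, an integer `j ≥ 1` and `a, b ∈ (L,U)`, the partial derivatives
of `σ_j(a,b) - τ_j(a,b)` with respect to `a` and with respect to `b` are bounded in
absolute value by `K_j = (8(U-L)j/r) exp(-(2/r)(U-L)²(j-1)²)`. -/
theorem sigma_sub_tau_deriv_bound (L U r : ℝ) (hLU : L < U) (hr : 0 < r)
    (j : ℕ) (hj : 1 ≤ j) (a b : ℝ) (ha : a ∈ Set.Ioo L U) (hb : b ∈ Set.Ioo L U) :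
    |deriv (fun a' => sigmaJ L U r a' b j - tauJ L U r a' b j) a| ≤
      8*(U-L)*j/r * Real.exp (-(2/r) * (U-L)^2 * ((j:ℝ)-1)^2) ∧
    |deriv (fun b' => sigmaJ L U r a b' j - tauJ L U r a b' j) b| ≤
      8*(U-L)*j/r * Real.exp (-(2/r) * (U-L)^2 * ((j:ℝ)-1)^2) := by
  refine ⟨key_bound L U r hLU hr j hj a b ha hb, ?_⟩
  have hsym : (fun b' => sigmaJ L U r a b' j - tauJ L U r a b' j)
      = (fun b' => sigmaJ L U r b' a j - tauJ L U r b' a j) := by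
    funext x
    simp only [sigmaJ, tauJ]
    ring_nf
  rw [hsym]
  exact key_bound L U r hLU hr j hj b a hb ha
end

section
/- Let L < U be real numbers and r > 0. For all a, b ∈ [L,U] and every integer j ≥ 1, the bounds 0 < σ_j(a,b) ≤ 2·exp(−(2/r)(U−L)²(j−1)²) and 0 < τ_j(a,b) ≤ 2·exp(−(2/r)(U−L)²·j·(j−1)) hold; in particular, the sequence j ↦ σ_j(a,b) − τ_j(a,b) is absolutely summable. -/
set_option maxHeartbeats 1600000 in
/-- For `L < U`, `r > 0` and `a, b ∈ [L,U]`: for every integer `j ≥ 1`,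
`0 < σ_j(a,b) ≤ 2·exp(-(2/r)(U-L)²(j-1)²)` and
`0 < τ_j(a,b) ≤ 2·exp(-(2/r)(U-L)²·j·(j-1))`; in particular the sequence
`j ↦ σ_j(a,b) - τ_j(a,b)` is absolutely summable. -/
theorem sigma_tau_bounds_and_abs_summable (L U r : ℝ) (hLU : L < U) (hr : 0 < r)
    (a b : ℝ) (ha : a ∈ Set.Icc L U) (hb : b ∈ Set.Icc L U) :
    (∀ j : ℕ, 1 ≤ j →
      (0 < sigmaJ L U r a b j ∧
        sigmaJ L U r a b j ≤ 2 * Real.exp (-(2/r) * (U-L)^2 * ((j:ℝ)-1)^2)) ∧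
      (0 < tauJ L U r a b j ∧
        tauJ L U r a b j ≤ 2 * Real.exp (-(2/r) * (U-L)^2 * ((j:ℝ) * ((j:ℝ)-1))))) ∧
    Summable (fun k : ℕ => |sigmaJ L U r a b (k+1) - tauJ L U r a b (k+1)|) := by
  obtain ⟨ha1, ha2⟩ := ha
  obtain ⟨hb1, hb2⟩ := hb
  have hUL : (0:ℝ) < U - L := sub_pos.mpr hLU
  have hs : (0:ℝ) < 2/r := by positivity
  have mono : ∀ x y : ℝ, x ≤ y → Real.exp (-(2/r) * y) ≤ Real.exp (-(2/r) * x) := by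
    intro x y h
    apply Real.exp_le_exp.mpr
    have := mul_le_mul_of_nonneg_left h hs.le
    linarith
  have key : ∀ j : ℕ, 1 ≤ j →
      (0 < sigmaJ L U r a b j ∧
        sigmaJ L U r a b j ≤ 2 * Real.exp (-(2/r) * (U-L)^2 * ((j:ℝ)-1)^2)) ∧
      (0 < tauJ L U r a b j ∧
        tauJ L U r a b j ≤ 2 * Real.exp (-(2/r) * (U-L)^2 * ((j:ℝ) * ((j:ℝ)-1)))) := by
    intro j hj
    have hj1 : (1:ℝ) ≤ (j:ℝ) := by exact_mod_cast hj
    have hm : (0:ℝ) ≤ (U-L) * ((j:ℝ)-1) := by nlinarith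
    constructor
    · refine ⟨by unfold sigmaJ; positivity, ?_⟩
      have h1 : (U-L) * ((j:ℝ)-1) ≤ (U-L)*(j:ℝ) + L - a := by nlinarith
      have h2 : (U-L) * ((j:ℝ)-1) ≤ (U-L)*(j:ℝ) + L - b := by nlinarith
      have h3 : (U-L) * ((j:ℝ)-1) ≤ (U-L)*(j:ℝ) - U + a := by nlinarith
      have h4 : (U-L) * ((j:ℝ)-1) ≤ (U-L)*(j:ℝ) - U + b := by nlinarith
      have k1 : (U-L)^2 * ((j:ℝ)-1)^2
          ≤ ((U-L)*(j:ℝ) + L - a) * ((U-L)*(j:ℝ) + L - b) := by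
        nlinarith [mul_le_mul h1 h2 hm (hm.trans h1)]
      have k2 : (U-L)^2 * ((j:ℝ)-1)^2
          ≤ ((U-L)*(j:ℝ) - U + a) * ((U-L)*(j:ℝ) - U + b) := by
        nlinarith [mul_le_mul h3 h4 hm (hm.trans h3)]
      have e1 := mono _ _ k1
      have e2 := mono _ _ k2
      have hrg : -(2/r) * (U-L)^2 * ((j:ℝ)-1)^2
          = -(2/r) * ((U-L)^2 * ((j:ℝ)-1)^2) := by ring
      unfold sigmaJ
      rw [hrg]
      linarith
    · refine ⟨by unfold tauJ; positivity, ?_⟩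
      have h1 : (U-L)*(j:ℝ) * ((U-L)*((j:ℝ)-1)) ≤ (U-L)*(j:ℝ) * ((U-L)*(j:ℝ) + a - b) := by
        apply mul_le_mul_of_nonneg_left (by nlinarith) (by positivity)
      have h2 : (U-L)*(j:ℝ) * ((U-L)*((j:ℝ)-1)) ≤ (U-L)*(j:ℝ) * ((U-L)*(j:ℝ) + b - a) := by
        apply mul_le_mul_of_nonneg_left (by nlinarith) (by positivity)
      have k1 : (U-L)^2 * ((j:ℝ) * ((j:ℝ)-1))
          ≤ (U-L)*(j:ℝ) * ((U-L)*(j:ℝ) + a - b) := by nlinarith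
      have k2 : (U-L)^2 * ((j:ℝ) * ((j:ℝ)-1))
          ≤ (U-L)*(j:ℝ) * ((U-L)*(j:ℝ) + b - a) := by nlinarith
      have e1 := mono _ _ k1
      have e2 := mono _ _ k2
      have w1 : -(2*(U-L)*(j:ℝ)/r) * ((U-L)*(j:ℝ) + a - b)
          = -(2/r) * ((U-L)*(j:ℝ) * ((U-L)*(j:ℝ) + a - b)) := by ring
      have w2 : -(2*(U-L)*(j:ℝ)/r) * ((U-L)*(j:ℝ) + b - a)
          = -(2/r) * ((U-L)*(j:ℝ) * ((U-L)*(j:ℝ) + b - a)) := by ring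
      have hrg : -(2/r) * (U-L)^2 * ((j:ℝ) * ((j:ℝ)-1))
          = -(2/r) * ((U-L)^2 * ((j:ℝ) * ((j:ℝ)-1))) := by ring
      unfold tauJ
      rw [w1, w2, hrg]
      linarith
  refine ⟨key, ?_⟩
  set c : ℝ := (2/r) * (U-L)^2 with hc
  have hcpos : 0 < c := by positivity
  have hgsum : Summable (fun k : ℕ => 4 * Real.exp (-c) ^ k) :=
    (summable_geometric_of_lt_one (Real.exp_nonneg _)
      (Real.exp_lt_one_iff.mpr (by linarith))).mul_left 4
  have hle : ∀ k : ℕ, |sigmaJ L U r a b (k+1) - tauJ L U r a b (k+1)|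
      ≤ 4 * Real.exp (-c) ^ k := by
    intro k
    obtain ⟨⟨hsp, hsb⟩, ⟨htp, htb⟩⟩ := key (k+1) (Nat.le_add_left 1 k)
    have hk : (0:ℝ) ≤ (k:ℝ) := Nat.cast_nonneg k
    have hksq : (k:ℝ) ≤ (k:ℝ)^2 := by
      rcases Nat.eq_zero_or_pos k with h | h
      · simp [h]
      · have : (1:ℝ) ≤ (k:ℝ) := by exact_mod_cast h
        nlinarith
    have hcast : ((k+1 : ℕ) : ℝ) = (k:ℝ) + 1 := by push_cast; ring
    have hek : Real.exp (-c) ^ k = Real.exp ((k:ℝ) * (-c)) := by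
      rw [← Real.exp_nat_mul]
    have hUL2 : (0:ℝ) ≤ (U-L)^2 := sq_nonneg _
    have hkk : Real.exp ((k:ℝ) * (-c)) = Real.exp (-(2/r) * ((U-L)^2 * (k:ℝ))) := by
      congr 1; rw [hc]; ring
    have hsb' : sigmaJ L U r a b (k+1) ≤ 2 * Real.exp (-c) ^ k := by
      refine hsb.trans ?_
      rw [hek, hkk, hcast]
      have hrg : -(2/r) * (U-L)^2 * (((k:ℝ)+1)-1)^2
          = -(2/r) * ((U-L)^2 * (k:ℝ)^2) := by ring
      rw [hrg]
      have := mono ((U-L)^2 * (k:ℝ)) ((U-L)^2 * (k:ℝ)^2)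
        (mul_le_mul_of_nonneg_left hksq hUL2)
      linarith
    have htb' : tauJ L U r a b (k+1) ≤ 2 * Real.exp (-c) ^ k := by
      refine htb.trans ?_
      rw [hek, hkk, hcast]
      have hrg : -(2/r) * (U-L)^2 * (((k:ℝ)+1) * (((k:ℝ)+1)-1))
          = -(2/r) * ((U-L)^2 * (((k:ℝ)+1) * (k:ℝ))) := by ring
      rw [hrg]
      have hkq : (k:ℝ) ≤ ((k:ℝ)+1) * (k:ℝ) := by nlinarith
      have := mono ((U-L)^2 * (k:ℝ)) ((U-L)^2 * (((k:ℝ)+1) * (k:ℝ)))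
        (mul_le_mul_of_nonneg_left hkq hUL2)
      linarith
    calc |sigmaJ L U r a b (k+1) - tauJ L U r a b (k+1)|
        ≤ sigmaJ L U r a b (k+1) + tauJ L U r a b (k+1) := by
          rw [abs_sub_le_iff]; constructor <;> linarith
      _ ≤ 4 * Real.exp (-c) ^ k := by linarith
  exact Summable.of_nonneg_of_le (fun k => abs_nonneg _) hle hgsum
end

section
/- Let L < U be real numbers and r > 0. If a ∈ {L, U} and b ∈ [L,U], or b ∈ {L, U} and a ∈ [L,U], then ∑_{j=1}^∞ (σ_j(a,b) − τ_j(a,b)) = 1 (the series telescopes); equivalently, the expression 1 − ∑_{j=1}^∞ (σ_j(a,b) − τ_j(a,b)) vanishes whenever a or b equals one of the endpoints L, U. -/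
/-- Telescoping series. -/
lemma tel_aux (f : ℕ → ℝ) (hmono : ∀ n, f (n+1) ≤ f n)
    (hlim : Filter.Tendsto f Filter.atTop (nhds 0)) :
    ∑' k : ℕ, (f k - f (k+1)) = f 0 := by
  have h : HasSum (fun k => f k - f (k+1)) (f 0) := by
    rw [hasSum_iff_tendsto_nat_of_nonneg (fun i => sub_nonneg.2 (hmono i))]
    have hs : ∀ n, ∑ i ∈ Finset.range n, (f i - f (i+1)) = f 0 - f n :=
      fun n => Finset.sum_range_sub' f n
    simp only [hs]
    simpa using tendsto_const_nhds.sub hlim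
  exact h.tsum_eq

/-- The specific telescoping series used in the endpoint case. -/
lemma exp_tel_aux (r d e : ℝ) (hr : 0 < r) (hd : 0 < d) (he : 0 ≤ e) :
    ∑' k : ℕ, (Real.exp (-(2/r) * (d*k * (d*k + e)))
      - Real.exp (-(2/r) * (d*(k+1:ℝ) * (d*(k+1:ℝ) + e)))) = 1 := by
  have h2r : (0:ℝ) < 2/r := by positivity
  have hmono : ∀ n : ℕ, Real.exp (-(2/r) * (d*(n+1:ℕ) * (d*(n+1:ℕ) + e)))
      ≤ Real.exp (-(2/r) * (d*n * (d*n + e))) := by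
    intro n
    apply Real.exp_le_exp.2
    have hn : (0:ℝ) ≤ n := Nat.cast_nonneg n
    push_cast
    rw [neg_mul, neg_mul, neg_le_neg_iff]
    apply mul_le_mul_of_nonneg_left _ h2r.le
    nlinarith [mul_nonneg hd.le hn, mul_nonneg (mul_nonneg hd.le hn) he]
  have hlim : Filter.Tendsto (fun n : ℕ => Real.exp (-(2/r) * (d*n * (d*n + e))))
      Filter.atTop (nhds 0) := by
    have hq0 : 0 ≤ Real.exp (-(2/r) * (d*d)) := (Real.exp_pos _).le
    have hq1 : Real.exp (-(2/r) * (d*d)) < 1 := by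
      rw [Real.exp_lt_one_iff]
      nlinarith [mul_pos h2r (mul_pos hd hd)]
    have hb : ∀ n : ℕ, Real.exp (-(2/r) * (d*n * (d*n + e)))
        ≤ (Real.exp (-(2/r) * (d*d)))^n := by
      intro n
      rw [← Real.exp_nat_mul]
      apply Real.exp_le_exp.2
      have hn : (n:ℝ) ≤ (n:ℝ)^2 := by
        exact_mod_cast Nat.le_self_pow two_ne_zero n
      have hn0 : (0:ℝ) ≤ n := Nat.cast_nonneg n
      have hineq : d*d*(n:ℝ) ≤ d*n*(d*n+e) := by
        nlinarith [mul_nonneg (mul_nonneg hd.le hn0) he,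
          mul_nonneg (mul_pos hd hd).le (sub_nonneg.2 hn)]
      nlinarith [mul_le_mul_of_nonneg_left hineq h2r.le]
    exact squeeze_zero (fun n => (Real.exp_pos _).le) hb
      (tendsto_pow_atTop_nhds_zero_of_lt_one hq0 hq1)
  calc ∑' k : ℕ, (Real.exp (-(2/r) * (d*k * (d*k + e)))
        - Real.exp (-(2/r) * (d*(k+1:ℝ) * (d*(k+1:ℝ) + e))))
      = ∑' k : ℕ, (Real.exp (-(2/r) * (d*k * (d*k + e)))
        - Real.exp (-(2/r) * (d*(k+1:ℕ) * (d*(k+1:ℕ) + e)))) := by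
        apply tsum_congr; intro k; push_cast; ring_nf
    _ = Real.exp (-(2/r) * (d*(0:ℕ) * (d*(0:ℕ) + e))) :=
        tel_aux (fun n : ℕ => Real.exp (-(2/r) * (d*n * (d*n + e)))) hmono hlim
    _ = 1 := by norm_num

lemma sigmaJ_symm (L U r a b : ℝ) (j : ℕ) : sigmaJ L U r a b j = sigmaJ L U r b a j := by
  simp only [sigmaJ]; ring_nf

lemma tauJ_symm (L U r a b : ℝ) (j : ℕ) : tauJ L U r a b j = tauJ L U r b a j := by
  simp only [tauJ]; ring_nf

lemma case_L (L U r b : ℝ) (hLU : L < U) (hr : 0 < r) (hb : b ∈ Set.Icc L U) :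
    ∑' k : ℕ, (sigmaJ L U r L b (k+1) - tauJ L U r L b (k+1)) = 1 := by
  refine Eq.trans (tsum_congr ?_)
    (exp_tel_aux r (U-L) (b-L) hr (by linarith) (by linarith [hb.1]))
  intro k
  simp only [sigmaJ, tauJ]
  push_cast
  ring_nf

lemma case_U (L U r b : ℝ) (hLU : L < U) (hr : 0 < r) (hb : b ∈ Set.Icc L U) :
    ∑' k : ℕ, (sigmaJ L U r U b (k+1) - tauJ L U r U b (k+1)) = 1 := by
  refine Eq.trans (tsum_congr ?_)
    (exp_tel_aux r (U-L) (U-b) hr (by linarith) (by linarith [hb.2]))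
  intro k
  simp only [sigmaJ, tauJ]
  push_cast
  ring_nf

/-- If `a ∈ {L,U}` and `b ∈ [L,U]`, or `b ∈ {L,U}` and `a ∈ [L,U]`, then
`∑_{j=1}^∞ (σ_j(a,b) - τ_j(a,b)) = 1` (the series telescopes); equivalently,
`1 - ∑_{j≥1} (σ_j - τ_j)` vanishes when `a` or `b` equals one of the endpoints.
(The series is indexed by `j = k+1`, `k : ℕ`.) -/
theorem sigma_tau_telescopes_at_endpoints (L U r : ℝ) (hLU : L < U) (hr : 0 < r)
    (a b : ℝ)
    (h : (a ∈ ({L, U} : Set ℝ) ∧ b ∈ Set.Icc L U) ∨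
         (b ∈ ({L, U} : Set ℝ) ∧ a ∈ Set.Icc L U)) :
    ∑' k : ℕ, (sigmaJ L U r a b (k+1) - tauJ L U r a b (k+1)) = 1 := by
  rcases h with ⟨ha, hb⟩ | ⟨hb, ha⟩
  · simp only [Set.mem_insert_iff, Set.mem_singleton_iff] at ha
    rcases ha with heq | heq <;> rw [heq]
    · exact case_L L U r b hLU hr hb
    · exact case_U L U r b hLU hr hb
  · have hswap : ∑' k : ℕ, (sigmaJ L U r a b (k+1) - tauJ L U r a b (k+1))
        = ∑' k : ℕ, (sigmaJ L U r b a (k+1) - tauJ L U r b a (k+1)) :=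
      tsum_congr fun k => by rw [sigmaJ_symm, tauJ_symm]
    rw [hswap]
    simp only [Set.mem_insert_iff, Set.mem_singleton_iff] at hb
    rcases hb with heq | heq <;> rw [heq]
    · exact case_L L U r a hLU hr ha
    · exact case_U L U r a hLU hr ha
end

section
/- Let L < U be real numbers and r > 0. For all a, b ∈ ℝ, the function γ satisfies |γ(L,U;r,a,b)| ≤ K(L,U,r)·(U − L). -/
/- ### Auxiliary lemmas -/

lemma exp_sub_exp_le' {x y z : ℝ} (hzx : z ≤ x) (hxy : x ≤ y) :
    Real.exp (-x) - Real.exp (-y) ≤ (y - x) * Real.exp (-z) := by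
  have h1 : Real.exp (-y) = Real.exp (-x) * Real.exp (x - y) := by
    rw [← Real.exp_add]; ring_nf
  have h2 : (x - y) + 1 ≤ Real.exp (x - y) := Real.add_one_le_exp _
  have h3 : Real.exp (-x) ≤ Real.exp (-z) := Real.exp_le_exp.2 (by linarith)
  have h4 : Real.exp (-x) - Real.exp (-y) = Real.exp (-x) * (1 - Real.exp (x-y)) := by
    rw [h1]; ring
  have h5 : Real.exp (-x) * (1 - Real.exp (x-y)) ≤ Real.exp (-x) * (y - x) :=
    mul_le_mul_of_nonneg_left (by linarith) (Real.exp_pos _).le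
  have h6 : Real.exp (-x) * (y-x) ≤ Real.exp (-z) * (y-x) :=
    mul_le_mul_of_nonneg_right h3 (by linarith)
  rw [h4]; nlinarith

lemma exp_pair {c P Q Z M : ℝ} (hc : 0 ≤ c) (hZP : Z ≤ P) (hPQ : P ≤ Q) (hQP : Q - P ≤ M) :
    Real.exp (-(c*P)) - Real.exp (-(c*Q)) ≤ c*M * Real.exp (-(c*Z)) := by
  have h := exp_sub_exp_le' (mul_le_mul_of_nonneg_left hZP hc)
    (mul_le_mul_of_nonneg_left hPQ hc)
  have h2 : (c*Q - c*P) * Real.exp (-(c*Z)) ≤ c*M*Real.exp (-(c*Z)) := by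
    apply mul_le_mul_of_nonneg_right _ (Real.exp_pos _).le
    nlinarith
  linarith

set_option maxHeartbeats 1000000 in
lemma term_bounds (L U r a b : ℝ) (hLU : L < U) (hr : 0 < r)
    (ha : a ∈ Set.Ioo L U) (hb : b ∈ Set.Ioo L U) (k : ℕ) :
    0 ≤ sigmaJ L U r a b (k+1) - tauJ L U r a b (k+1) ∧
    sigmaJ L U r a b (k+1) - tauJ L U r a b (k+1) ≤
      8*(U-L)^2*((k:ℝ)+1)/r * Real.exp (-(2/r) * (U-L)^2 * (k:ℝ)^2) := by
  obtain ⟨ha1, ha2⟩ := ha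
  obtain ⟨hb1, hb2⟩ := hb
  have hk0 : (0:ℝ) ≤ (k:ℝ) := Nat.cast_nonneg k
  have hc0 : (0:ℝ) ≤ 2/r := by positivity
  have key : ∀ jv : ℝ, 1 ≤ jv →
      (0 ≤ (Real.exp (-((2/r) * (((U-L)*jv + L - a) * ((U-L)*jv + L - b)))) +
            Real.exp (-((2/r) * (((U-L)*jv - U + a) * ((U-L)*jv - U + b))))) -
           (Real.exp (-((2/r) * ((U-L)*jv * ((U-L)*jv + a - b)))) +
            Real.exp (-((2/r) * ((U-L)*jv * ((U-L)*jv + b - a))))) ∧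
      (Real.exp (-((2/r) * (((U-L)*jv + L - a) * ((U-L)*jv + L - b)))) +
            Real.exp (-((2/r) * (((U-L)*jv - U + a) * ((U-L)*jv - U + b))))) -
           (Real.exp (-((2/r) * ((U-L)*jv * ((U-L)*jv + a - b)))) +
            Real.exp (-((2/r) * ((U-L)*jv * ((U-L)*jv + b - a))))) ≤
        (2/r) * (2*(U-L)^2*jv) * Real.exp (-((2/r) * ((U-L)^2*(jv-1)^2))) * 2) := by
    intro jv hj1
    have hP1Q1 : ((U-L)*jv + L - a) * ((U-L)*jv + L - b) ≤ (U-L)*jv * ((U-L)*jv + a - b) := by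
      have h := mul_nonneg (by linarith : (0:ℝ) ≤ a - L)
        (by nlinarith : (0:ℝ) ≤ 2*(U-L)*jv - (b - L))
      nlinarith
    have hP2Q2 : ((U-L)*jv - U + a) * ((U-L)*jv - U + b) ≤ (U-L)*jv * ((U-L)*jv + b - a) := by
      have h := mul_nonneg (by linarith : (0:ℝ) ≤ (U-L) - (a - L))
        (by nlinarith : (0:ℝ) ≤ (2*jv-1)*(U-L) + (b - L))
      nlinarith
    have hZP1 : (U-L)^2*(jv-1)^2 ≤ ((U-L)*jv + L - a) * ((U-L)*jv + L - b) := by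
      have f1 : (U-L)*(jv-1) ≤ (U-L)*jv + L - a := by nlinarith
      have f2 : (U-L)*(jv-1) ≤ (U-L)*jv + L - b := by nlinarith
      have f0 : (0:ℝ) ≤ (U-L)*(jv-1) := by nlinarith
      nlinarith [mul_le_mul f1 f2 f0 (by nlinarith : (0:ℝ) ≤ (U-L)*jv + L - a)]
    have hZP2 : (U-L)^2*(jv-1)^2 ≤ ((U-L)*jv - U + a) * ((U-L)*jv - U + b) := by
      have f1 : (U-L)*(jv-1) ≤ (U-L)*jv - U + a := by nlinarith
      have f2 : (U-L)*(jv-1) ≤ (U-L)*jv - U + b := by nlinarith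
      have f0 : (0:ℝ) ≤ (U-L)*(jv-1) := by nlinarith
      nlinarith [mul_le_mul f1 f2 f0 (by nlinarith : (0:ℝ) ≤ (U-L)*jv - U + a)]
    have hQ1d : (U-L)*jv * ((U-L)*jv + a - b) - ((U-L)*jv + L - a) * ((U-L)*jv + L - b)
        ≤ 2*(U-L)^2*jv := by
      have h1 := mul_nonneg (by nlinarith : (0:ℝ) ≤ 2*(U-L)*jv)
        (by linarith : (0:ℝ) ≤ (U-L) - (a - L))
      have h2 := mul_nonneg (by linarith : (0:ℝ) ≤ a - L) (by linarith : (0:ℝ) ≤ b - L)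
      nlinarith
    have hQ2d : (U-L)*jv * ((U-L)*jv + b - a) - ((U-L)*jv - U + a) * ((U-L)*jv - U + b)
        ≤ 2*(U-L)^2*jv := by
      have h1 := mul_nonneg (by linarith : (0:ℝ) ≤ (U-L) - (a-L))
        (by linarith : (0:ℝ) ≤ (U-L) - (b-L))
      have h2 := mul_nonneg (by nlinarith : (0:ℝ) ≤ 2*(U-L)*jv) (by linarith : (0:ℝ) ≤ a - L)
      nlinarith
    constructor
    · have g1 : Real.exp (-((2/r) * ((U-L)*jv * ((U-L)*jv + a - b)))) ≤
          Real.exp (-((2/r) * (((U-L)*jv + L - a) * ((U-L)*jv + L - b)))) :=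
        Real.exp_le_exp.2 (by nlinarith [mul_le_mul_of_nonneg_left hP1Q1 hc0])
      have g2 : Real.exp (-((2/r) * ((U-L)*jv * ((U-L)*jv + b - a)))) ≤
          Real.exp (-((2/r) * (((U-L)*jv - U + a) * ((U-L)*jv - U + b)))) :=
        Real.exp_le_exp.2 (by nlinarith [mul_le_mul_of_nonneg_left hP2Q2 hc0])
      linarith
    · have e1 := exp_pair hc0 hZP1 hP1Q1 hQ1d
      have e2 := exp_pair hc0 hZP2 hP2Q2 hQ2d
      linarith
  have hkey := key ((k:ℝ)+1) (by linarith)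
  have harg : ∀ x y : ℝ, x = y → Real.exp x = Real.exp y := fun x y h => by rw [h]
  have hsig : sigmaJ L U r a b (k+1) =
      Real.exp (-((2/r) * (((U-L)*((k:ℝ)+1) + L - a) * ((U-L)*((k:ℝ)+1) + L - b)))) +
      Real.exp (-((2/r) * (((U-L)*((k:ℝ)+1) - U + a) * ((U-L)*((k:ℝ)+1) - U + b)))) := by
    simp only [sigmaJ]
    push_cast
    congr 1 <;> exact harg _ _ (by ring)
  have htau : tauJ L U r a b (k+1) =
      Real.exp (-((2/r) * ((U-L)*((k:ℝ)+1) * ((U-L)*((k:ℝ)+1) + a - b)))) +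
      Real.exp (-((2/r) * ((U-L)*((k:ℝ)+1) * ((U-L)*((k:ℝ)+1) + b - a)))) := by
    simp only [tauJ]
    push_cast
    congr 1 <;> exact harg _ _ (by ring)
  rw [hsig, htau]
  refine ⟨hkey.1, le_trans hkey.2 (le_of_eq ?_)⟩
  have h : ((k:ℝ)+1) - 1 = (k:ℝ) := by ring
  rw [h]
  ring_nf

lemma summable_kexp (c : ℝ) (hc : 0 < c) :
    Summable (fun k : ℕ => ((k:ℝ)+1) * Real.exp (-(c * (k:ℝ)^2))) := by
  have hx : Real.exp (-c) < 1 := Real.exp_lt_one_iff.2 (by linarith)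
  have hx0 : 0 < Real.exp (-c) := Real.exp_pos _
  have hgeo : Summable (fun k : ℕ => ((k:ℝ)+1) * Real.exp (-c) ^ k) := by
    have h1 : Summable (fun k : ℕ => (k:ℝ) ^ 1 * Real.exp (-c) ^ k) :=
      summable_pow_mul_geometric_of_norm_lt_one 1 (by rwa [Real.norm_eq_abs, abs_of_pos hx0])
    have h2 : Summable (fun k : ℕ => Real.exp (-c) ^ k) := summable_geometric_of_lt_one hx0.le hx
    have := h1.add h2
    refine this.congr fun k => by ring
  refine Summable.of_nonneg_of_le (fun k => by positivity) (fun k => ?_) hgeo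
  have hk : ((k:ℝ)) ≤ (k:ℝ)^2 := by exact_mod_cast Nat.le_self_pow (by norm_num) k
  have h : Real.exp (-(c * (k:ℝ)^2)) ≤ Real.exp (-c) ^ k := by
    rw [← Real.exp_nat_mul]
    apply Real.exp_le_exp.2
    have := mul_le_mul_of_nonneg_left hk hc.le
    push_cast
    nlinarith
  exact mul_le_mul_of_nonneg_left h (by positivity)

lemma summable_base (L U r : ℝ) (hLU : L < U) (hr : 0 < r) :
    Summable (fun k : ℕ => ((k:ℝ)+1) * Real.exp (-(2/r) * (U-L)^2 * (k:ℝ)^2)) := by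
  have hD : (0:ℝ) < U - L := by linarith
  have hc0 : (0:ℝ) < 2/r*(U-L)^2 := by positivity
  have hfun : (fun k : ℕ => ((k:ℝ)+1) * Real.exp (-(2/r) * (U-L)^2 * (k:ℝ)^2)) =
      (fun k : ℕ => ((k:ℝ)+1) * Real.exp (-((2/r*(U-L)^2) * (k:ℝ)^2))) := by
    funext k; ring_nf
  rw [hfun]
  exact summable_kexp _ hc0

lemma sum_closed (β : ℝ) (N : ℕ) :
    ∑ k ∈ Finset.range (N+1), (((k:ℝ)+1) * (1 - β*(k:ℝ)^2)) =
      ((N:ℝ)+1)*((N:ℝ)+2)/2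
        - β*((N:ℝ)^2*((N:ℝ)+1)^2/4 + (N:ℝ)*((N:ℝ)+1)*(2*(N:ℝ)+1)/6) := by
  induction N with
  | zero => norm_num
  | succ n ih =>
    rw [Finset.sum_range_succ, ih]
    push_cast
    ring

private lemma quad_ineq (n c : ℝ) (hn : 1 ≤ n) (hb : 0 < c) (h1 : 1 ≤ c*(n+1)^2)
    (h2 : c*n^2 ≤ 1) :
    1 ≤ 4*c*((n+1)*(n+2)/2 - c*(n^2*(n+1)^2/4 + n*(n+1)*(2*n+1)/6)) := by
  have hp : 0 ≤ c*(n+1)^2 - 1 := by linarith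
  have hq : 0 ≤ 1 - c*n^2 := by linarith
  nlinarith [mul_nonneg hp hq, mul_nonneg (mul_nonneg hp hq) (by nlinarith : (0:ℝ) ≤ n^2),
    mul_nonneg hp (by linarith : (0:ℝ) ≤ n), mul_nonneg hq (by linarith : (0:ℝ) ≤ n),
    mul_nonneg hp (by nlinarith : (0:ℝ) ≤ n^2), mul_nonneg hq (by nlinarith : (0:ℝ) ≤ n^2),
    mul_nonneg hp (by nlinarith : (0:ℝ) ≤ n^3), mul_nonneg hq (by nlinarith : (0:ℝ) ≤ n^3)]

lemma one_le_KD (L U r : ℝ) (hLU : L < U) (hr : 0 < r) :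
    1 ≤ Kconst L U r * (U - L) := by
  have hD : (0:ℝ) < U - L := by linarith
  set c : ℝ := 2/r*(U-L)^2 with hc
  have hc0 : 0 < c := by positivity
  have hsum := summable_base L U r hLU hr
  have hterm : ∀ k : ℕ, ((k:ℝ)+1) * (1 - c*(k:ℝ)^2) ≤
      ((k:ℝ)+1) * Real.exp (-(2/r) * (U-L)^2 * (k:ℝ)^2) := by
    intro k
    have h1 : 1 - c*(k:ℝ)^2 ≤ Real.exp (-(c*(k:ℝ)^2)) := by
      have := Real.add_one_le_exp (-(c*(k:ℝ)^2)); linarith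
    have h2 : Real.exp (-(c*(k:ℝ)^2)) = Real.exp (-(2/r) * (U-L)^2 * (k:ℝ)^2) := by
      congr 1; rw [hc]; ring
    rw [← h2]
    exact mul_le_mul_of_nonneg_left h1 (by positivity)
  have hpartial : ∀ N : ℕ, ∑ k ∈ Finset.range (N+1),
      (((k:ℝ)+1) * Real.exp (-(2/r) * (U-L)^2 * (k:ℝ)^2)) ≤
      ∑' k : ℕ, ((k:ℝ)+1) * Real.exp (-(2/r) * (U-L)^2 * (k:ℝ)^2) := by
    intro N
    exact Summable.sum_le_tsum _ (fun k _ => by positivity) hsum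
  have hKD : Kconst L U r * (U - L) =
      4*c * ∑' k : ℕ, ((k:ℝ)+1) * Real.exp (-(2/r) * (U-L)^2 * (k:ℝ)^2) := by
    rw [Kconst, hc]; ring
  set N : ℕ := ⌊Real.sqrt (1/c)⌋₊ with hN
  have hs0 : (0:ℝ) ≤ Real.sqrt (1/c) := Real.sqrt_nonneg _
  have hsq : Real.sqrt (1/c) ^ 2 = 1/c := Real.sq_sqrt (by positivity)
  have hN1 : (N:ℝ) ≤ Real.sqrt (1/c) := Nat.floor_le hs0
  have hN2 : Real.sqrt (1/c) < (N:ℝ) + 1 := Nat.lt_floor_add_one _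
  have h2 : c * (N:ℝ)^2 ≤ 1 := by
    have h : (N:ℝ)^2 ≤ 1/c := by nlinarith
    calc c * (N:ℝ)^2 ≤ c * (1/c) := by nlinarith
    _ = 1 := by field_simp
  have h1 : 1 ≤ c * ((N:ℝ)+1)^2 := by
    have h : 1/c < ((N:ℝ)+1)^2 := by nlinarith
    have h' := mul_lt_mul_of_pos_left h hc0
    rw [mul_one_div, div_self hc0.ne'] at h'
    linarith
  have hE : ((N:ℝ)+1)*((N:ℝ)+2)/2
        - c*((N:ℝ)^2*((N:ℝ)+1)^2/4 + (N:ℝ)*((N:ℝ)+1)*(2*(N:ℝ)+1)/6) ≤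
      ∑' k : ℕ, ((k:ℝ)+1) * Real.exp (-(2/r) * (U-L)^2 * (k:ℝ)^2) := by
    rw [← sum_closed c N]
    exact le_trans (Finset.sum_le_sum (fun k _ => hterm k)) (hpartial N)
  rw [hKD]
  set T : ℝ := ∑' k : ℕ, ((k:ℝ)+1) * Real.exp (-(2/r) * (U-L)^2 * (k:ℝ)^2) with hTdef
  rcases Nat.eq_zero_or_pos N with h0 | hpos
  · have hcge : 1 ≤ c := by rw [h0] at h1; norm_num at h1; linarith
    rw [h0] at hE
    push_cast at hE
    have hT1 : 1 ≤ T := by linarith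
    nlinarith [mul_nonneg (by linarith : (0:ℝ) ≤ c - 1) (by linarith : (0:ℝ) ≤ T - 1)]
  · have hn1 : 1 ≤ (N:ℝ) := by exact_mod_cast hpos
    have hnlin := quad_ineq (N:ℝ) c hn1 hc0 h1 h2
    nlinarith [mul_nonneg (by positivity : (0:ℝ) ≤ 4*c) (sub_nonneg.2 hE)]

/-- For `L < U` and `r > 0`, `|γ(L,U;r,a,b)| ≤ K(L,U,r)·(U - L)` for all real `a, b`. -/
theorem gamma_abs_bound (L U r : ℝ) (hLU : L < U) (hr : 0 < r) (a b : ℝ) :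
    |gammaFn L U r a b| ≤ Kconst L U r * (U - L) := by
  have hKD1 := one_le_KD L U r hLU hr
  by_cases h : a ∈ Set.Ioo L U ∧ b ∈ Set.Ioo L U
  · obtain ⟨ha, hb⟩ := h
    have hbase := summable_base L U r hLU hr
    have hgfun : (fun k : ℕ => 8*(U-L)^2*((k:ℝ)+1)/r * Real.exp (-(2/r) * (U-L)^2 * (k:ℝ)^2)) =
        (fun k : ℕ => (8*(U-L)^2/r) * (((k:ℝ)+1) * Real.exp (-(2/r) * (U-L)^2 * (k:ℝ)^2))) := by
      funext k; ring
    have hg_sum : Summable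
        (fun k : ℕ => 8*(U-L)^2*((k:ℝ)+1)/r * Real.exp (-(2/r) * (U-L)^2 * (k:ℝ)^2)) := by
      rw [hgfun]; exact hbase.mul_left _
    have hf_sum : Summable (fun k : ℕ => sigmaJ L U r a b (k+1) - tauJ L U r a b (k+1)) :=
      Summable.of_nonneg_of_le (fun k => (term_bounds L U r a b hLU hr ⟨ha.1, ha.2⟩ ⟨hb.1, hb.2⟩ k).1)
        (fun k => (term_bounds L U r a b hLU hr ⟨ha.1, ha.2⟩ ⟨hb.1, hb.2⟩ k).2) hg_sum
    have hS0 : 0 ≤ ∑' k : ℕ, (sigmaJ L U r a b (k+1) - tauJ L U r a b (k+1)) :=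
      tsum_nonneg (fun k => (term_bounds L U r a b hLU hr ⟨ha.1, ha.2⟩ ⟨hb.1, hb.2⟩ k).1)
    have hSK : ∑' k : ℕ, (sigmaJ L U r a b (k+1) - tauJ L U r a b (k+1)) ≤
        ∑' k : ℕ, 8*(U-L)^2*((k:ℝ)+1)/r * Real.exp (-(2/r) * (U-L)^2 * (k:ℝ)^2) :=
      Summable.tsum_le_tsum (fun k => (term_bounds L U r a b hLU hr ⟨ha.1, ha.2⟩ ⟨hb.1, hb.2⟩ k).2)
        hf_sum hg_sum
    have htg : ∑' k : ℕ, 8*(U-L)^2*((k:ℝ)+1)/r * Real.exp (-(2/r) * (U-L)^2 * (k:ℝ)^2) =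
        Kconst L U r * (U - L) := by
      rw [hgfun, tsum_mul_left, Kconst]; ring
    rw [htg] at hSK
    rw [gammaFn, if_pos ⟨ha, hb⟩, abs_le]
    constructor <;> linarith
  · rw [gammaFn, if_neg h, abs_zero]
    linarith
end

section
/- Let L↓ < L↑ < U↓ < U↑ be real numbers, l > 0, 0 < s < l, and v ∈ ℝ. Then for all x ∈ ℝ, |ρ(x)| ≤ c_ρ := K_ρ·(U↑ − L↓), where K_ρ := K_{1,2} + K_{3,4} + K_{5,6} + K_{7,8}. -/
/-- `ρ(x) = γ₁(x)γ₂(x) - γ₃(x)γ₄(x) - γ₅(x)γ₆(x) + γ₇(x)γ₈(x)`, where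
`γ₁(x) = γ(L↓,U↑;s,0,x)`, `γ₂(x) = γ(L↓,U↑;l-s,x,v)`, `γ₃(x) = γ(L↑,U↑;s,0,x)`,
`γ₄(x) = γ(L↑,U↑;l-s,x,v)`, `γ₅(x) = γ(L↓,U↓;s,0,x)`, `γ₆(x) = γ(L↓,U↓;l-s,x,v)`,
`γ₇(x) = γ(L↑,U↓;s,0,x)`, `γ₈(x) = γ(L↑,U↓;l-s,x,v)`. -/
noncomputable def rhoFn (Ldown Lup Udown Uup l s v x : ℝ) : ℝ :=
  gammaFn Ldown Uup s 0 x * gammaFn Ldown Uup (l-s) x v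
  - gammaFn Lup Uup s 0 x * gammaFn Lup Uup (l-s) x v
  - gammaFn Ldown Udown s 0 x * gammaFn Ldown Udown (l-s) x v
  + gammaFn Lup Udown s 0 x * gammaFn Lup Udown (l-s) x v

/-- `K_ρ = K_{1,2} + K_{3,4} + K_{5,6} + K_{7,8}`. -/
noncomputable def Krho (Ldown Lup Udown Uup l s : ℝ) : ℝ :=
  2 * Kconst Ldown Uup s * Kconst Ldown Uup (l-s) * (Uup - Ldown)
  + 2 * Kconst Lup Uup s * Kconst Lup Uup (l-s) * (Uup - Lup)
  + 2 * Kconst Ldown Udown s * Kconst Ldown Udown (l-s) * (Udown - Ldown)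
  + 2 * Kconst Lup Udown s * Kconst Lup Udown (l-s) * (Udown - Lup)

open Real Filter

section Aux
variable {L U r a b : ℝ}

/-- helper: `exp(-(2/r)A) ≤ exp(-(2/r)B)` when `B ≤ A`, `r > 0`. -/
lemma exp_aux (hr : 0 < r) {A B : ℝ} (h : B ≤ A) :
    Real.exp (-(2/r) * A) ≤ Real.exp (-(2/r) * B) := by
  have hq : (0:ℝ) ≤ 2/r := by positivity
  have := mul_le_mul_of_nonneg_left h hq
  exact Real.exp_le_exp.mpr (by nlinarith)

lemma summable_gauss (hr : 0 < r) (hLU : L < U) :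
    Summable (fun k : ℕ => Real.exp (-(2/r) * (U-L)^2 * (k:ℝ)^2)) := by
  have hD : 0 < U - L := sub_pos.2 hLU
  have hc : 0 < (2/r) * (U-L)^2 := by positivity
  set c := (2/r) * (U-L)^2 with hcc
  apply Summable.of_nonneg_of_le (fun k => (Real.exp_pos _).le) (fun k => ?_)
    (summable_geometric_of_lt_one (le_of_lt (Real.exp_pos (-c)))
      (Real.exp_lt_one_iff.mpr (by linarith)))
  rw [← Real.exp_nat_mul]
  apply Real.exp_le_exp.mpr
  have hk : (k:ℝ) ≤ (k:ℝ)^2 := by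
    have : k ≤ k^2 := Nat.le_self_pow two_ne_zero k
    exact_mod_cast this
  nlinarith

lemma sigma_le_gauss (hr : 0 < r) (ha : a ∈ Set.Ioo L U) (hb : b ∈ Set.Ioo L U) (k : ℕ) :
    sigmaJ L U r a b (k+1) ≤ 2 * Real.exp (-(2/r) * (U-L)^2 * (k:ℝ)^2) := by
  obtain ⟨ha1, ha2⟩ := ha; obtain ⟨hb1, hb2⟩ := hb
  have hk0 : (0:ℝ) ≤ (k:ℝ) := Nat.cast_nonneg k
  have hDk : (0:ℝ) ≤ (U-L)*(k:ℝ) := by nlinarith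
  rw [sigmaJ]
  push_cast
  have hgoal : ∀ X Y : ℝ, (U-L)*(k:ℝ) ≤ X → (U-L)*(k:ℝ) ≤ Y →
      Real.exp (-(2/r) * (X*Y)) ≤ Real.exp (-(2/r) * (U-L)^2 * (k:ℝ)^2) := by
    intro X Y hX hY
    have h2 : (U-L)*(k:ℝ) * ((U-L)*(k:ℝ)) ≤ X * Y :=
      mul_le_mul hX hY hDk (le_trans hDk hX)
    have := exp_aux hr (B := (U-L)^2*(k:ℝ)^2) (A := X*Y) (by nlinarith)
    calc Real.exp (-(2/r) * (X*Y)) ≤ Real.exp (-(2/r) * ((U-L)^2*(k:ℝ)^2)) := this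
      _ = Real.exp (-(2/r) * (U-L)^2 * (k:ℝ)^2) := by ring_nf
  have e1 := hgoal ((U-L)*((k:ℝ)+1) + L - a) ((U-L)*((k:ℝ)+1) + L - b)
    (by nlinarith) (by nlinarith)
  have e2 := hgoal ((U-L)*((k:ℝ)+1) - U + a) ((U-L)*((k:ℝ)+1) - U + b)
    (by nlinarith) (by nlinarith)
  linarith

lemma tau_le_gauss (hr : 0 < r) (ha : a ∈ Set.Ioo L U) (hb : b ∈ Set.Ioo L U) (k : ℕ) :
    tauJ L U r a b (k+1) ≤ 2 * Real.exp (-(2/r) * (U-L)^2 * (k:ℝ)^2) := by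
  obtain ⟨ha1, ha2⟩ := ha; obtain ⟨hb1, hb2⟩ := hb
  have hk0 : (0:ℝ) ≤ (k:ℝ) := Nat.cast_nonneg k
  have hDk : (0:ℝ) ≤ (U-L)*(k:ℝ) := by nlinarith
  rw [tauJ]
  push_cast
  have key : ∀ Z : ℝ, (U-L)*(k:ℝ) ≤ Z →
      Real.exp (-(2*(U-L)*((k:ℝ)+1)/r) * Z) ≤ Real.exp (-(2/r) * (U-L)^2 * (k:ℝ)^2) := by
    intro Z hZ
    have h1 : -(2*(U-L)*((k:ℝ)+1)/r) * Z = -(2/r) * ((U-L)*((k:ℝ)+1) * Z) := by ring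
    rw [h1]
    have h2 : (U-L)*(k:ℝ) * ((U-L)*(k:ℝ)) ≤ (U-L)*((k:ℝ)+1) * Z :=
      mul_le_mul (by nlinarith) hZ hDk (by nlinarith)
    have := exp_aux hr (B := (U-L)^2*(k:ℝ)^2) (A := (U-L)*((k:ℝ)+1) * Z) (by nlinarith)
    calc Real.exp (-(2/r) * ((U-L)*((k:ℝ)+1) * Z)) ≤
        Real.exp (-(2/r) * ((U-L)^2*(k:ℝ)^2)) := this
      _ = Real.exp (-(2/r) * (U-L)^2 * (k:ℝ)^2) := by ring_nf
  have e1 := key ((U-L)*((k:ℝ)+1) + a - b) (by nlinarith)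
  have e2 := key ((U-L)*((k:ℝ)+1) + b - a) (by nlinarith)
  linarith

lemma tau_le_sigma (hr : 0 < r) (ha : a ∈ Set.Ioo L U) (hb : b ∈ Set.Ioo L U) (k : ℕ) :
    tauJ L U r a b (k+1) ≤ sigmaJ L U r a b (k+1) := by
  obtain ⟨ha1, ha2⟩ := ha; obtain ⟨hb1, hb2⟩ := hb
  have hk0 : (0:ℝ) ≤ (k:ℝ) := Nat.cast_nonneg k
  rw [tauJ, sigmaJ]
  push_cast
  set P := (U-L)*((k:ℝ)+1) with hP
  have hPD : U - L ≤ P := by rw [hP]; nlinarith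
  rw [add_comm (Real.exp (-(2/r) * ((P + L - a) * (P + L - b))))]
  apply add_le_add
  · -- tau first term ≤ sigma second term
    have h1 : -(2*(U-L)*((k:ℝ)+1)/r) * (P + a - b) = -(2/r) * (P * (P + a - b)) := by
      rw [hP]; ring
    rw [h1]
    apply exp_aux hr
    nlinarith [mul_nonneg (by linarith : (0:ℝ) ≤ U - b) (by linarith : (0:ℝ) ≤ 2*P - U + a)]
  · -- tau second term ≤ sigma first term
    have h1 : -(2*(U-L)*((k:ℝ)+1)/r) * (P + b - a) = -(2/r) * (P * (P + b - a)) := by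
      rw [hP]; ring
    rw [h1]
    apply exp_aux hr
    nlinarith [mul_nonneg (by linarith : (0:ℝ) ≤ b - L) (by linarith : (0:ℝ) ≤ 2*P - a + L)]

lemma sigma_succ_le_tau (hr : 0 < r) (ha : a ∈ Set.Ioo L U) (hb : b ∈ Set.Ioo L U) (k : ℕ) :
    sigmaJ L U r a b (k+1+1) ≤ tauJ L U r a b (k+1) := by
  obtain ⟨ha1, ha2⟩ := ha; obtain ⟨hb1, hb2⟩ := hb
  have hk0 : (0:ℝ) ≤ (k:ℝ) := Nat.cast_nonneg k
  rw [tauJ, sigmaJ]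
  push_cast
  set P := (U-L)*((k:ℝ)+1) with hP
  have hPD : U - L ≤ P := by rw [hP]; nlinarith
  have hs1 : (U-L)*((k:ℝ)+1+1) + L - a = P + U - a := by rw [hP]; ring
  have hs2 : (U-L)*((k:ℝ)+1+1) + L - b = P + U - b := by rw [hP]; ring
  have hs3 : (U-L)*((k:ℝ)+1+1) - U + a = P + a - L := by rw [hP]; ring
  have hs4 : (U-L)*((k:ℝ)+1+1) - U + b = P + b - L := by rw [hP]; ring
  rw [hs1, hs2, hs3, hs4]
  apply add_le_add
  · have h1 : -(2*(U-L)*((k:ℝ)+1)/r) * (P + a - b) = -(2/r) * (P * (P + a - b)) := by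
      rw [hP]; ring
    rw [h1]
    apply exp_aux hr
    nlinarith [mul_nonneg (by linarith : (0:ℝ) ≤ U - a) (by linarith : (0:ℝ) ≤ U - b),
      mul_nonneg (by linarith : (0:ℝ) ≤ P) (by linarith : (0:ℝ) ≤ U - a)]
  · have h1 : -(2*(U-L)*((k:ℝ)+1)/r) * (P + b - a) = -(2/r) * (P * (P + b - a)) := by
      rw [hP]; ring
    rw [h1]
    apply exp_aux hr
    nlinarith [mul_nonneg (by linarith : (0:ℝ) ≤ a - L) (by linarith : (0:ℝ) ≤ b - L),
      mul_nonneg (by linarith : (0:ℝ) ≤ P) (by linarith : (0:ℝ) ≤ a - L)]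

lemma sigma_one_le_two (hr : 0 < r) (ha : a ∈ Set.Ioo L U) (hb : b ∈ Set.Ioo L U) :
    sigmaJ L U r a b 1 ≤ 2 := by
  obtain ⟨ha1, ha2⟩ := ha; obtain ⟨hb1, hb2⟩ := hb
  rw [sigmaJ]
  push_cast
  have e1 : Real.exp (-(2/r) * (((U-L)*1 + L - a) * ((U-L)*1 + L - b))) ≤ 1 := by
    apply Real.exp_le_one_iff.mpr  -- check name
    have : (0:ℝ) ≤ ((U-L)*1 + L - a) * ((U-L)*1 + L - b) :=
      mul_nonneg (by linarith) (by linarith)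
    have hq : (0:ℝ) ≤ 2/r := by positivity
    nlinarith
  have e2 : Real.exp (-(2/r) * (((U-L)*1 - U + a) * ((U-L)*1 - U + b))) ≤ 1 := by
    apply Real.exp_le_one_iff.mpr
    have : (0:ℝ) ≤ ((U-L)*1 - U + a) * ((U-L)*1 - U + b) :=
      mul_nonneg (by linarith) (by linarith)
    have hq : (0:ℝ) ≤ 2/r := by positivity
    nlinarith
  linarith

lemma abs_gammaFn_le_one (hLU : L < U) (hr : 0 < r) : |gammaFn L U r a b| ≤ 1 := by
  rw [gammaFn]
  split
  · rename_i h
    obtain ⟨ha, hb⟩ := h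
    have Sg : Summable (fun k : ℕ => 2 * Real.exp (-(2/r) * (U-L)^2 * (k:ℝ)^2)) :=
      (summable_gauss hr hLU).mul_left 2
    have Ssig : Summable (fun k : ℕ => sigmaJ L U r a b (k+1)) := by
      apply Summable.of_nonneg_of_le (fun k => ?_) (fun k => sigma_le_gauss hr ha hb k) Sg
      · rw [sigmaJ]; positivity
    have Stau : Summable (fun k : ℕ => tauJ L U r a b (k+1)) := by
      apply Summable.of_nonneg_of_le (fun k => ?_) (fun k => tau_le_gauss hr ha hb k) Sg
      · rw [tauJ]; positivity
    have Ssig' : Summable (fun k : ℕ => sigmaJ L U r a b (k+1+1)) := by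
      have := (summable_nat_add_iff (f := fun k : ℕ => sigmaJ L U r a b (k+1)) 1).mpr Ssig
      exact this
    have hT0 : 0 ≤ ∑' k : ℕ, (sigmaJ L U r a b (k+1) - tauJ L U r a b (k+1)) :=
      tsum_nonneg (fun k => sub_nonneg.mpr (tau_le_sigma hr ha hb k))
    have hT2 : ∑' k : ℕ, (sigmaJ L U r a b (k+1) - tauJ L U r a b (k+1)) ≤ 2 := by
      rw [Summable.tsum_sub Ssig Stau]
      have h1 : ∑' k : ℕ, sigmaJ L U r a b (k+1)
          = sigmaJ L U r a b 1 + ∑' k : ℕ, sigmaJ L U r a b (k+1+1) :=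
        Summable.tsum_eq_zero_add Ssig
      have h2 : ∑' k : ℕ, sigmaJ L U r a b (k+1+1) ≤ ∑' k : ℕ, tauJ L U r a b (k+1) :=
        Summable.tsum_le_tsum (fun k => sigma_succ_le_tau hr ha hb k) Ssig' Stau
      have h3 := sigma_one_le_two hr ha hb
      linarith
    rw [abs_le]
    constructor <;> linarith
  · norm_num

lemma summable_kgauss (hr : 0 < r) (hLU : L < U) :
    Summable (fun k : ℕ => ((k:ℝ)+1) * Real.exp (-(2/r) * (U-L)^2 * (k:ℝ)^2)) := by
  have hD : 0 < U - L := sub_pos.2 hLU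
  have hc : 0 < (2/r) * (U-L)^2 := by positivity
  have hx : ‖Real.exp (-((2/r) * (U-L)^2))‖ < 1 := by
    rw [Real.norm_eq_abs, abs_of_pos (Real.exp_pos _)]
    exact Real.exp_lt_one_iff.mpr (by linarith)
  have hgeom : Summable (fun k : ℕ => ((k:ℝ)+1) * Real.exp (-((2/r) * (U-L)^2)) ^ k) := by
    have h1 := summable_pow_mul_geometric_of_norm_lt_one 1 hx
    have h2 := summable_geometric_of_lt_one (le_of_lt (Real.exp_pos _))
      (by rw [Real.norm_eq_abs, abs_of_pos (Real.exp_pos _)] at hx; exact hx)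
    have := h1.add h2
    apply this.congr
    intro k
    simp [pow_one]
    ring
  apply Summable.of_nonneg_of_le (fun k => by positivity) (fun k => ?_) hgeom
  apply mul_le_mul_of_nonneg_left _ (by positivity)
  rw [← Real.exp_nat_mul]
  apply Real.exp_le_exp.mpr
  have hk : (k:ℝ) ≤ (k:ℝ)^2 := by
    have : k ≤ k^2 := Nat.le_self_pow two_ne_zero k
    exact_mod_cast this
  nlinarith

lemma two_le_Kconst_mul (hLU : L < U) (hr : 0 < r) : 2 ≤ Kconst L U r * (U - L) := by
  have hD : 0 < U - L := sub_pos.2 hLU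
  have hc : 0 < (2/r) * (U-L)^2 := by positivity
  set c := (2/r) * (U-L)^2 with hcc
  -- telescoping sum
  set f : ℕ → ℝ := fun k => Real.exp (-(c * (k:ℝ)^2)) with hf
  have hfnn : ∀ k : ℕ, 0 ≤ f k - f (k+1) := by
    intro k
    have : c * (k:ℝ)^2 ≤ c * ((k:ℝ)+1)^2 := by
      apply mul_le_mul_of_nonneg_left _ hc.le
      have : (0:ℝ) ≤ (k:ℝ) := Nat.cast_nonneg k
      nlinarith
    have := Real.exp_le_exp.mpr (neg_le_neg this)
    simp only [hf]
    push_cast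
    linarith
  have hftend : Tendsto f atTop (nhds 0) := by
    have h1 : Tendsto (fun n : ℕ => (n:ℝ)^2) atTop atTop :=
      (tendsto_pow_atTop two_ne_zero).comp tendsto_natCast_atTop_atTop
    have h2 : Tendsto (fun n : ℕ => c * (n:ℝ)^2) atTop atTop := h1.const_mul_atTop hc
    have h3 : Tendsto (fun n : ℕ => -(c * (n:ℝ)^2)) atTop atBot := tendsto_neg_atBot_iff.mpr h2
    exact Real.tendsto_exp_atBot.comp h3
  have htel : HasSum (fun k : ℕ => f k - f (k+1)) 1 := by
    rw [hasSum_iff_tendsto_nat_of_nonneg hfnn]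
    have heq : ∀ n : ℕ, ∑ i ∈ Finset.range n, (f i - f (i+1)) = f 0 - f n :=
      fun n => Finset.sum_range_sub' f n
    simp only [heq]
    have hf0 : f 0 = 1 := by simp [hf]
    rw [hf0]
    simpa using tendsto_const_nhds.sub hftend
  -- termwise bound  f k - f (k+1) ≤ 2c (k+1) exp(-c k²)
  have hterm : ∀ k : ℕ, f k - f (k+1) ≤ 2*c*(((k:ℝ)+1) * Real.exp (-(c*(k:ℝ)^2))) := by
    intro k
    have hsplit : f (k+1) = Real.exp (-(c*(k:ℝ)^2)) * Real.exp (-(c*(2*(k:ℝ)+1))) := by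
      rw [hf, ← Real.exp_add]
      push_cast
      ring_nf
    have h1 : 1 - c*(2*(k:ℝ)+1) ≤ Real.exp (-(c*(2*(k:ℝ)+1))) := by
      have := Real.add_one_le_exp (-(c*(2*(k:ℝ)+1)))
      linarith
    have h2 : 0 < Real.exp (-(c*(k:ℝ)^2)) := Real.exp_pos _
    have hk : (0:ℝ) ≤ (k:ℝ) := Nat.cast_nonneg k
    have : f k - f (k+1) = Real.exp (-(c*(k:ℝ)^2)) * (1 - Real.exp (-(c*(2*(k:ℝ)+1)))) := by
      rw [hsplit, hf]; ring
    rw [this]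
    have hb1 : 1 - Real.exp (-(c*(2*(k:ℝ)+1))) ≤ c*(2*(k:ℝ)+1) := by linarith
    calc Real.exp (-(c*(k:ℝ)^2)) * (1 - Real.exp (-(c*(2*(k:ℝ)+1))))
        ≤ Real.exp (-(c*(k:ℝ)^2)) * (c*(2*(k:ℝ)+1)) := by
          apply mul_le_mul_of_nonneg_left hb1 h2.le
      _ ≤ 2*c*(((k:ℝ)+1) * Real.exp (-(c*(k:ℝ)^2))) := by nlinarith
  -- the Kconst sum equals the c-form sum
  have hfun : (fun k : ℕ => ((k:ℝ)+1) * Real.exp (-(2/r) * (U-L)^2 * (k:ℝ)^2))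
      = fun k : ℕ => ((k:ℝ)+1) * Real.exp (-(c*(k:ℝ)^2)) := by
    funext k
    rw [hcc]
    ring_nf
  have hsumk : Summable (fun k : ℕ => ((k:ℝ)+1) * Real.exp (-(c*(k:ℝ)^2))) := by
    rw [← hfun]; exact summable_kgauss hr hLU
  have hT : 1 ≤ 2*c*(∑' k : ℕ, ((k:ℝ)+1) * Real.exp (-(c*(k:ℝ)^2))) := by
    have h1 : (1:ℝ) = ∑' k : ℕ, (f k - f (k+1)) := (htel.tsum_eq).symm
    have h2 : ∑' k : ℕ, (f k - f (k+1))
        ≤ ∑' k : ℕ, 2*c*(((k:ℝ)+1) * Real.exp (-(c*(k:ℝ)^2))) :=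
      Summable.tsum_le_tsum hterm htel.summable (hsumk.mul_left _)
    rw [tsum_mul_left] at h2
    linarith
  rw [Kconst, hfun]
  set T := ∑' k : ℕ, ((k:ℝ)+1) * Real.exp (-(c*(k:ℝ)^2)) with hTT
  have : 8*(U-L)/r * T * (U-L) = 4*(c*T) := by rw [hcc]; field_simp; ring
  rw [this]
  nlinarith

lemma abs_sub' (p q : ℝ) : |p - q| ≤ |p| + |q| := by
  rw [sub_eq_add_neg]
  exact (abs_add_le _ _).trans (by rw [abs_neg])

lemma term_lb {L' U' E r1 r2 : ℝ} (hLU : L' < U') (hr1 : 0 < r1) (hr2 : 0 < r2)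
    (hE : U' - L' ≤ E) :
    8 ≤ 2 * Kconst L' U' r1 * Kconst L' U' r2 * (U' - L') * E := by
  have hD : 0 < U' - L' := sub_pos.2 hLU
  have k1 := two_le_Kconst_mul hLU hr1
  have k2 := two_le_Kconst_mul hLU hr2
  have hK1 : 0 < Kconst L' U' r1 := by nlinarith
  have hK2 : 0 < Kconst L' U' r2 := by nlinarith
  have h4 : 4 ≤ (Kconst L' U' r1 * (U'-L')) * (Kconst L' U' r2 * (U'-L')) := by nlinarith
  nlinarith [mul_pos (mul_pos hK1 hK2) hD]

end Aux

/-- For `L↓ < L↑ < U↓ < U↑`, `l > 0`, `0 < s < l`, `v ∈ ℝ`, we have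
`|ρ(x)| ≤ c_ρ = K_ρ·(U↑ - L↓)` for all real `x`. -/
theorem rhoFn_abs_bound (Ldown Lup Udown Uup l s v : ℝ)
    (h1 : Ldown < Lup) (h2 : Lup < Udown) (h3 : Udown < Uup)
    (hl : 0 < l) (hs : 0 < s) (hsl : s < l) :
    ∀ x : ℝ, |rhoFn Ldown Lup Udown Uup l s v x| ≤
      Krho Ldown Lup Udown Uup l s * (Uup - Ldown) := by
  intro x
  have hs' : 0 < l - s := by linarith
  -- bound |rho| ≤ 4
  have g1 := abs_gammaFn_le_one (L := Ldown) (U := Uup) (r := s) (a := 0) (b := x) (by linarith) hs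
  have g2 := abs_gammaFn_le_one (L := Ldown) (U := Uup) (r := l-s) (a := x) (b := v) (by linarith) hs'
  have g3 := abs_gammaFn_le_one (L := Lup) (U := Uup) (r := s) (a := 0) (b := x) (by linarith) hs
  have g4 := abs_gammaFn_le_one (L := Lup) (U := Uup) (r := l-s) (a := x) (b := v) (by linarith) hs'
  have g5 := abs_gammaFn_le_one (L := Ldown) (U := Udown) (r := s) (a := 0) (b := x) (by linarith) hs
  have g6 := abs_gammaFn_le_one (L := Ldown) (U := Udown) (r := l-s) (a := x) (b := v) (by linarith) hs'
  have g7 := abs_gammaFn_le_one (L := Lup) (U := Udown) (r := s) (a := 0) (b := x) (by linarith) hs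
  have g8 := abs_gammaFn_le_one (L := Lup) (U := Udown) (r := l-s) (a := x) (b := v) (by linarith) hs'
  have m12 : |gammaFn Ldown Uup s 0 x * gammaFn Ldown Uup (l-s) x v| ≤ 1 := by
    rw [abs_mul]; exact mul_le_one₀ g1 (abs_nonneg _) g2
  have m34 : |gammaFn Lup Uup s 0 x * gammaFn Lup Uup (l-s) x v| ≤ 1 := by
    rw [abs_mul]; exact mul_le_one₀ g3 (abs_nonneg _) g4
  have m56 : |gammaFn Ldown Udown s 0 x * gammaFn Ldown Udown (l-s) x v| ≤ 1 := by
    rw [abs_mul]; exact mul_le_one₀ g5 (abs_nonneg _) g6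
  have m78 : |gammaFn Lup Udown s 0 x * gammaFn Lup Udown (l-s) x v| ≤ 1 := by
    rw [abs_mul]; exact mul_le_one₀ g7 (abs_nonneg _) g8
  have hrho : |rhoFn Ldown Lup Udown Uup l s v x| ≤ 4 := by
    rw [rhoFn]
    set A := gammaFn Ldown Uup s 0 x * gammaFn Ldown Uup (l-s) x v
    set B := gammaFn Lup Uup s 0 x * gammaFn Lup Uup (l-s) x v
    set C := gammaFn Ldown Udown s 0 x * gammaFn Ldown Udown (l-s) x v
    set D := gammaFn Lup Udown s 0 x * gammaFn Lup Udown (l-s) x v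
    calc |A - B - C + D| ≤ |A - B - C| + |D| := abs_add_le _ _
      _ ≤ |A - B| + |C| + |D| := by linarith [abs_sub' (A - B) C]
      _ ≤ |A| + |B| + |C| + |D| := by linarith [abs_sub' A B]
      _ ≤ 4 := by linarith
  -- RHS lower bound
  have t12 : (8:ℝ) ≤ 2 * Kconst Ldown Uup s * Kconst Ldown Uup (l-s) * (Uup - Ldown) * (Uup - Ldown) :=
    term_lb (by linarith) hs hs' (by linarith)
  have t34 : (8:ℝ) ≤ 2 * Kconst Lup Uup s * Kconst Lup Uup (l-s) * (Uup - Lup) * (Uup - Ldown) :=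
    term_lb (by linarith) hs hs' (by linarith)
  have t56 : (8:ℝ) ≤ 2 * Kconst Ldown Udown s * Kconst Ldown Udown (l-s) * (Udown - Ldown) * (Uup - Ldown) :=
    term_lb (by linarith) hs hs' (by linarith)
  have t78 : (8:ℝ) ≤ 2 * Kconst Lup Udown s * Kconst Lup Udown (l-s) * (Udown - Lup) * (Uup - Ldown) :=
    term_lb (by linarith) hs hs' (by linarith)
  rw [Krho]
  nlinarith
end
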